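/- arXiv:1708.04986 — 9 statements merged into one kernel-verified Lean document; each statement's English description precedes it below -/
import Mathlib

section
/- If a Steiner triple system STS(n) on {0,1,...,n-1} has min-sum equal to n, then for every i ∈ {1,...,(n-1)/2} the set {0,i,n-i} is a block of the system; moreover, if an STS(n) on {0,1,...,n-1} has max-sum equal to 2n-3, then for every j ∈ {0,...,(n-3)/2} the set {j,n-2-j,n-1} is a block of the system. -/
/-- A Steiner triple system of order `n` on the point set `{0,1,…,n-1}`:
every block is a 3-subset of `{0,…,n-1}` and every 2-subset of `{0,…,n-1}`
is contained in exactly one block. -/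
def IsSTS (n : ℕ) (B : Finset (Finset ℕ)) : Prop :=
  (∀ b ∈ B, b ⊆ Finset.range n ∧ b.card = 3) ∧
  ∀ T : Finset ℕ, T ⊆ Finset.range n → T.card = 2 → ∃! b, b ∈ B ∧ T ⊆ b

/-!
The blocks through a fixed point `p` pair off the other points as `{p, i, t i}` with `t` an
involution, so `∑ (i + t i)` over `i ≠ p` is twice the sum of those points. For `p = 0` that
total is `n (n - 1)`: if every block sum is at least `n`, all `n - 1` summands `i + t i`
are at least their average `n`, hence equal to it, and `t i = n - i`. Dually, for `p = n - 1`
the total is `(n - 1)(n - 2)`, and a max-sum of `2n - 3` forces `t j = n - 2 - j`.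
-/

open Finset

namespace Finset

variable {ι M : Type*}

theorem pairwise_ne_of_card_triple_eq_three [DecidableEq ι] {a b c : ι} (h : #{a, b, c} = 3) :
    a ≠ b ∧ a ≠ c ∧ b ≠ c := by
  refine ⟨?_, ?_, ?_⟩ <;> rintro rfl <;>
    simp only [mem_insert, mem_singleton, true_or, or_true, insert_eq_of_mem] at h <;>
    exact h.not_lt (card_le_two.trans_lt (by norm_num))

theorem sum_triple_of_card_eq_three [DecidableEq ι] [AddCommMonoid M] {a b c : ι}
    (h : #{a, b, c} = 3) (f : ι → M) : ∑ x ∈ {a, b, c}, f x = f a + f b + f c := by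
  obtain ⟨hab, hac, hbc⟩ := pairwise_ne_of_card_triple_eq_three h
  rw [sum_insert (by simp [hab, hac]), sum_pair hbc, add_assoc]

theorem sum_comp_involution_eq [AddCommMonoid M] {s : Finset ι} {t : ι → ι}
    (hmem : ∀ i ∈ s, t i ∈ s) (hinv : ∀ i ∈ s, t (t i) = i) (f : ι → M) :
    ∑ i ∈ s, f (t i) = ∑ i ∈ s, f i :=
  sum_nbij' t t hmem hmem hinv hinv fun _ _ => rfl

variable [AddCommMonoid M] [PartialOrder M] [IsOrderedCancelAddMonoid M] {s : Finset ι}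
  {f : ι → M} {c : M}

theorem forall_eq_of_forall_le_of_sum_eq (h : ∀ i ∈ s, c ≤ f i) (hsum : ∑ i ∈ s, f i = #s • c) :
    ∀ i ∈ s, f i = c := fun i hi =>
  (((sum_eq_sum_iff_of_le h).1 (by rw [sum_const, hsum])) i hi).symm

theorem forall_eq_of_forall_ge_of_sum_eq (h : ∀ i ∈ s, f i ≤ c) (hsum : ∑ i ∈ s, f i = #s • c) :
    ∀ i ∈ s, f i = c :=
  (sum_eq_sum_iff_of_le h).1 (by rw [sum_const, hsum])

end Finset

namespace IsSTS

variable {n : ℕ} {B : Finset (Finset ℕ)}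

theorem card_eq_three (hS : IsSTS n B) {b : Finset ℕ} (hb : b ∈ B) : #b = 3 := (hS.1 b hb).2

theorem three_le_of_nonempty (hS : IsSTS n B) (hne : B.Nonempty) : 3 ≤ n := by
  obtain ⟨b, hb⟩ := hne
  simpa [hS.card_eq_three hb] using card_le_card (hS.1 b hb).1

theorem exists_triple_mem (hS : IsSTS n B) {x y : ℕ} (hx : x < n) (hy : y < n) (hxy : x ≠ y) :
    ∃ z < n, {x, y, z} ∈ B := by
  have hpair : #{x, y} = 2 := card_pair hxy
  obtain ⟨b, ⟨hb, hxyb⟩, -⟩ := hS.2 {x, y} (by simp [insert_subset_iff, hx, hy]) hpair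
  obtain ⟨z, hzb, hz⟩ := exists_mem_notMem_of_card_lt_card (s := {x, y}) (t := b)
    (by rw [hpair, hS.card_eq_three hb]; norm_num)
  simp only [mem_insert, mem_singleton, not_or] at hz
  have htriple : {x, y, z} = b := by
    refine eq_of_subset_of_card_le ?_ ?_
    · exact insert_subset_iff.2 ⟨hxyb (by simp), insert_subset_iff.2 ⟨hxyb (by simp),
        singleton_subset_iff.2 hzb⟩⟩
    · rw [hS.card_eq_three hb, card_insert_of_notMem (by simp [hxy, Ne.symm hz.1]),
        card_pair (Ne.symm hz.2)]
  exact ⟨z, mem_range.1 ((hS.1 b hb).1 hzb), htriple ▸ hb⟩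

theorem eq_of_triple_mem (hS : IsSTS n B) {x y z w : ℕ} (hx : x < n) (hy : y < n)
    (hxy : x ≠ y) (hz : {x, y, z} ∈ B) (hw : {x, y, w} ∈ B) : z = w := by
  obtain ⟨b, -, huniq⟩ := hS.2 {x, y} (by simp [insert_subset_iff, hx, hy]) (card_pair hxy)
  have hzw : ({x, y, z} : Finset ℕ) = {x, y, w} :=
    (huniq _ ⟨hz, by simp [insert_subset_iff]⟩).trans
      (huniq _ ⟨hw, by simp [insert_subset_iff]⟩).symm
  obtain ⟨-, hxw, hyw⟩ := pairwise_ne_of_card_triple_eq_three (hS.card_eq_three hw)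
  have : w ∈ ({x, y, z} : Finset ℕ) := hzw ▸ by simp
  simp only [mem_insert, mem_singleton] at this
  grind

theorem exists_partner (hS : IsSTS n B) {p : ℕ} (hp : p < n) :
    ∃ t : ℕ → ℕ, ∀ i ∈ (range n).erase p,
      t i ∈ (range n).erase p ∧ {p, i, t i} ∈ B ∧ t (t i) = i := by
  have hthird : ∀ i ∈ (range n).erase p, ∃ k ∈ (range n).erase p, {p, i, k} ∈ B := by
    intro i hi
    obtain ⟨hip, hin⟩ := mem_erase.1 hi
    obtain ⟨k, hkn, hB⟩ := hS.exists_triple_mem hp (mem_range.1 hin) hip.symm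
    have hkp : k ≠ p := (pairwise_ne_of_card_triple_eq_three (hS.card_eq_three hB)).2.1.symm
    exact ⟨k, mem_erase.2 ⟨hkp, mem_range.2 hkn⟩, hB⟩
  choose! t hts htB using hthird
  refine ⟨t, fun i hi => ⟨hts i hi, htB i hi, ?_⟩⟩
  obtain ⟨htp, htn⟩ := mem_erase.1 (hts i hi)
  refine (hS.eq_of_triple_mem hp (mem_range.1 htn) htp.symm ?_ (htB _ (hts i hi))).symm
  rw [pair_comm]
  exact htB i hi

theorem triple_zero_mem_of_le_sum (hS : IsSTS n B) (hmin : ∀ b ∈ B, n ≤ ∑ x ∈ b, x) {i : ℕ}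
    (hi : 0 < i) (hin : i < n) : {0, i, n - i} ∈ B := by
  obtain ⟨t, ht⟩ := hS.exists_partner (p := 0) (by omega)
  have hle : ∀ a ∈ (range n).erase 0, n ≤ a + t a := fun a ha => by
    have := hmin _ (ht a ha).2.1
    rwa [sum_triple_of_card_eq_three (hS.card_eq_three (ht a ha).2.1), zero_add] at this
  have htotal : ∑ a ∈ (range n).erase 0, (a + t a) = #((range n).erase 0) • n := by
    rw [sum_add_distrib, sum_comp_involution_eq (fun a ha => (ht a ha).1)
      (fun a ha => (ht a ha).2.2) (fun x => x), sum_erase (range n) (f := fun x => x) rfl,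
      smul_eq_mul, card_erase_of_mem (mem_range.2 (by omega)), card_range]
    linarith [sum_range_id_mul_two n, mul_comm n (n - 1)]
  have hi' : i ∈ (range n).erase 0 := mem_erase.2 ⟨by omega, mem_range.2 hin⟩
  have hti : t i = n - i := by
    have := forall_eq_of_forall_le_of_sum_eq hle htotal i hi'
    omega
  exact hti ▸ (ht i hi').2.1

theorem triple_last_mem_of_sum_le (hS : IsSTS n B) (hmax : ∀ b ∈ B, ∑ x ∈ b, x ≤ 2 * n - 3)
    {j : ℕ} (hj : j < n - 1) : {j, n - 2 - j, n - 1} ∈ B := by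
  obtain ⟨t, ht⟩ := hS.exists_partner (p := n - 1) (by omega)
  have hs : (range n).erase (n - 1) = range (n - 1) := by
    ext a
    simp only [mem_erase, mem_range]
    omega
  rw [hs] at ht
  have hge : ∀ a ∈ range (n - 1), a + t a ≤ n - 2 := fun a ha => by
    have := hmax _ (ht a ha).2.1
    rw [sum_triple_of_card_eq_three (hS.card_eq_three (ht a ha).2.1)] at this
    have := mem_range.1 ha
    omega
  have htotal : ∑ a ∈ range (n - 1), (a + t a) = #(range (n - 1)) • (n - 2) := by
    rw [sum_add_distrib, sum_comp_involution_eq (fun a ha => (ht a ha).1)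
      (fun a ha => (ht a ha).2.2) (fun x => x), smul_eq_mul, card_range,
      show n - 2 = n - 1 - 1 by omega]
    linarith [sum_range_id_mul_two (n - 1)]
  have hj' : j ∈ range (n - 1) := mem_range.2 hj
  have htj : t j = n - 2 - j := by
    have := forall_eq_of_forall_ge_of_sum_eq hge htotal j hj'
    omega
  have hblock := (ht j hj').2.1
  rwa [htj, insert_comm, pair_comm] at hblock

end IsSTS

/-- If an STS(n) on `{0,…,n-1}` has min-sum `n`, then `{0,i,n-i}` is a block for
every `i ∈ {1,…,(n-1)/2}`; and if it has max-sum `2n-3`, then `{j,n-2-j,n-1}` is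
a block for every `j ∈ {0,…,(n-3)/2}`. -/
theorem sts_minSum_eq_n_blocks_and_maxSum_eq_blocks (n : ℕ) (B : Finset (Finset ℕ))
    (hS : IsSTS n B) (hne : B.Nonempty) :
    ((B.inf' hne fun b => ∑ x ∈ b, x) = n →
      ∀ i, 1 ≤ i → i ≤ (n - 1) / 2 → ({0, i, n - i} : Finset ℕ) ∈ B) ∧
    ((B.sup' hne fun b => ∑ x ∈ b, x) = 2 * n - 3 →
      ∀ j, j ≤ (n - 3) / 2 → ({j, n - 2 - j, n - 1} : Finset ℕ) ∈ B) := by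
  have hn := hS.three_le_of_nonempty hne
  refine ⟨fun hmin i hi hin => ?_, fun hmax j hj => ?_⟩
  · exact hS.triple_zero_mem_of_le_sum (fun b hb => hmin ▸ inf'_le _ hb) hi (by omega)
  · exact hS.triple_last_mem_of_sum_le (fun b hb => hmax ▸ le_sup' (fun b => ∑ x ∈ b, x) hb)
      (by omega)
end

section
/- Let n = 3m ≥ 9 with m odd and let π_B be the Bose Mapping. Then for every 0 ≤ x < y ≤ m-1, π_B((x,0)) + π_B((y,0)) + π_B((x ⊕_b y, 1)) ≥ n. -/
/-- The Bose operation on `{0,1,…,m-1}` (for `m` odd):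
`x ⊕_b y = ((m+1)/2)(x+y) mod m`. -/
def boseOp (m x y : ℕ) : ℕ := ((m + 1) / 2 * (x + y)) % m

/-- The Bose Mapping `π_B` on points `(x,i)`, `x ∈ {0,…,m-1}`, `i ∈ {0,1,2}`:
`(x,0) ↦ x`; `(x,1) ↦ 2m` if `x = 0` and `(x,1) ↦ 3m - y` where `x = 0 ⊕_b y ≠ 0`
(here `y = (2x) mod m` is the unique element with `0 ⊕_b y = x`);
`(x,2) ↦ m` if `x = 0` and `(x,2) ↦ m + (0 ⊕_b (m-x))` if `x ≠ 0`. -/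
def boseMap (m : ℕ) (p : ℕ × ℕ) : ℕ :=
  if p.2 = 0 then p.1
  else if p.2 = 1 then (if p.1 = 0 then 2 * m else 3 * m - (2 * p.1) % m)
  else if p.1 = 0 then m else m + boseOp m 0 (m - p.1)

/-! For odd `m`, `(m + 1) / 2` is the inverse of `2` modulo `m`, so `2 (x ⊕_b y) ≡ x + y`.
If `x ⊕_b y = 0` then `m ∣ x + y`, so `x + y ≥ m` and the sum is at least `m + 2m`;
otherwise `π_B(x ⊕_b y, 1) = 3m - (x + y) mod m ≥ 3m - (x + y)`. -/

theorem two_mul_boseOp_mod {m : ℕ} (hm : Odd m) (x y : ℕ) :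
    2 * boseOp m x y % m = (x + y) % m := by
  have hhalf : 2 * ((m + 1) / 2) = m + 1 := Nat.two_mul_div_two_of_even hm.add_one
  rw [boseOp, Nat.mul_mod_mod, ← Nat.mul_assoc, hhalf, Nat.add_one_mul, Nat.mul_add_mod_self_left]

theorem dvd_add_of_boseOp_eq_zero {m x y : ℕ} (hm : Odd m) (h : boseOp m x y = 0) :
    m ∣ x + y := by
  rw [Nat.dvd_iff_mod_eq_zero, ← two_mul_boseOp_mod hm, h, Nat.mul_zero, Nat.zero_mod]

theorem boseMap_mk_zero (m x : ℕ) : boseMap m (x, 0) = x := by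
  simp [boseMap]

theorem boseMap_zero_one (m : ℕ) : boseMap m (0, 1) = 2 * m := by
  simp [boseMap]

theorem boseMap_mk_one_of_ne_zero (m : ℕ) {z : ℕ} (hz : z ≠ 0) :
    boseMap m (z, 1) = 3 * m - 2 * z % m := by
  simp [boseMap, hz]

theorem boseMap_type2_sum_ge_01_general (m n : ℕ) (hm : Odd m) (hn : n = 3 * m) :
    ∀ x y : ℕ, x < y → y ≤ m - 1 →
      n ≤ boseMap m (x, 0) + boseMap m (y, 0) + boseMap m (boseOp m x y, 1) := by
  intro x y hxy _
  subst hn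
  rw [boseMap_mk_zero, boseMap_mk_zero]
  by_cases hb : boseOp m x y = 0
  · have hle : m ≤ x + y := Nat.le_of_dvd (by omega) (dvd_add_of_boseOp_eq_zero hm hb)
    rw [hb, boseMap_zero_one]
    omega
  · have hmod : (x + y) % m ≤ x + y := Nat.mod_le _ _
    rw [boseMap_mk_one_of_ne_zero m hb, two_mul_boseOp_mod hm]
    omega

/-- For every `0 ≤ x < y ≤ m-1`,
`π_B((x,0)) + π_B((y,0)) + π_B((x ⊕_b y, 1)) ≥ n` (`n = 3m`). -/
theorem boseMap_type2_sum_ge_01 (m n : ℕ) (hm : Odd m) (hm3 : 3 ≤ m) (hn : n = 3 * m) :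
    ∀ x y : ℕ, x < y → y ≤ m - 1 →
      n ≤ boseMap m (x, 0) + boseMap m (y, 0) + boseMap m (boseOp m x y, 1) :=
  boseMap_type2_sum_ge_01_general m n hm hn
end

section
/- Let n = 3m ≥ 9 with m odd and let π_B be the Bose Mapping. Then for every 0 ≤ x < y ≤ m-1, π_B((x,2)) + π_B((y,2)) + π_B((x ⊕_b y, 0)) ≥ n. -/
/-!
Writing `c = (m+1)/2`, we have `π_B((x,2)) = m + (c(m-x) mod m)` for all `x ≤ m`, and
`x ⊕_b y = c(x+y) mod m`. The three residues `c(m-x)`, `c(m-y)`, `c(x+y)` mod `m` add up to a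
multiple of `m`, since `(m-x) + (m-y) + (x+y) = 2m`. As `2c = m + 1`, `c` is a unit mod `m`, so
`c(m-y) mod m ≠ 0`; the sum of the residues is therefore at least `m`, and the whole sum at
least `3m`.
-/

lemma Nat.coprime_add_one_div_two {m : ℕ} (hm : Odd m) : Nat.Coprime ((m + 1) / 2) m := by
  obtain ⟨k, rfl⟩ := hm
  have hc : (2 * k + 1 + 1) / 2 = k + 1 := by omega
  rw [hc, show 2 * k + 1 = (k + 1) + k by ring]
  simp

lemma Nat.Coprime.mul_mod_ne_zero {c m t : ℕ} (hc : Nat.Coprime c m) (ht : 0 < t) (htm : t < m) :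
    c * t % m ≠ 0 := fun h =>
  absurd (Nat.le_of_dvd ht (hc.symm.dvd_of_dvd_mul_left (Nat.dvd_of_mod_eq_zero h))) (by omega)

lemma Nat.dvd_mul_mod_add_mul_mod_add_mul_mod {m u v w : ℕ} (c : ℕ) (h : m ∣ u + v + w) :
    m ∣ c * u % m + c * v % m + c * w % m := by
  rw [← ZMod.natCast_eq_zero_iff] at h ⊢
  push_cast [ZMod.natCast_mod] at h ⊢
  rw [← mul_add, ← mul_add, h, mul_zero]

lemma boseMap_snd_two {m x : ℕ} (hx : x ≤ m) : boseMap m (x, 2) = m + boseOp m 0 (m - x) := by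
  rcases Nat.eq_zero_or_pos x with rfl | hx0
  · simp [boseMap, boseOp]
  · simp [boseMap, hx0.ne']

theorem boseMap_type2_sum_ge_20_general (m n : ℕ) (hm : Odd m) (hn : n = 3 * m) :
    ∀ x y : ℕ, x < y → y ≤ m - 1 →
      n ≤ boseMap m (x, 2) + boseMap m (y, 2) + boseMap m (boseOp m x y, 0) := by
  intro x y hxy hy
  have hym : y < m := by omega
  have hdvd :
      m ∣ (m + 1) / 2 * (m - x) % m + (m + 1) / 2 * (m - y) % m + (m + 1) / 2 * (x + y) % m :=
    Nat.dvd_mul_mod_add_mul_mod_add_mul_mod _ ⟨2, by omega⟩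
  have hpos : (m + 1) / 2 * (m - y) % m ≠ 0 :=
    (Nat.coprime_add_one_div_two hm).mul_mod_ne_zero (by omega) (by omega)
  have hsum := Nat.le_of_dvd (by omega) hdvd
  rw [boseMap_snd_two (hxy.trans hym).le, boseMap_snd_two hym.le]
  simp only [boseMap, boseOp, if_true, zero_add]
  omega

/-- For every `0 ≤ x < y ≤ m-1`,
`π_B((x,2)) + π_B((y,2)) + π_B((x ⊕_b y, 0)) ≥ n` (`n = 3m`). -/
theorem boseMap_type2_sum_ge_20 (m n : ℕ) (hm : Odd m) (hm3 : 3 ≤ m) (hn : n = 3 * m) :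
    ∀ x y : ℕ, x < y → y ≤ m - 1 →
      n ≤ boseMap m (x, 2) + boseMap m (y, 2) + boseMap m (boseOp m x y, 0) :=
  boseMap_type2_sum_ge_20_general m n hm hn
end

section
/- For every n ≥ 9 with n ≡ 3 (mod 6), the image under the Bose Mapping of the block set of the Bose Construction is a Steiner triple system on {0,1,...,n-1} whose min-sum equals n. -/
/-- The block set of the Bose Construction on the point set
`X' = {(x,i) : x ∈ {0,…,m-1}, i ∈ {0,1,2}}`:
Type 1 blocks `{(x,0),(x,1),(x,2)}` for `x ∈ {0,…,m-1}`, and Type 2 blocks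
`{(x,i),(y,i),(x ⊕_b y, (i+1) mod 3)}` for `0 ≤ x < y ≤ m-1`, `i ∈ {0,1,2}`. -/
def boseBlocks (m : ℕ) : Finset (Finset (ℕ × ℕ)) :=
  ((Finset.range m).image fun x => ({(x, 0), (x, 1), (x, 2)} : Finset (ℕ × ℕ))) ∪
  ((((Finset.range m ×ˢ Finset.range m).filter fun p => p.1 < p.2) ×ˢ Finset.range 3).image
    fun q => ({(q.1.1, q.2), (q.1.2, q.2), (boseOp m q.1.1 q.1.2, (q.2 + 1) % 3)} :
      Finset (ℕ × ℕ)))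

/-!
Modulo `m` the Bose operation is `x ⊕_b y = (x + y) / 2`, an idempotent commutative quasigroup;
hence two points of `ℤ_m × ℤ_3` on the same level lie only in the type-two block they span, two
points `(x, i)`, `(y, i + 1)` only in the type-two block through `(x, i)` and `(t, i)` with
`x ⊕_b t = y`, and two points over the same `x` only in the type-one block. The Bose mapping is a
bijection onto `{0, …, 3m - 1}` sending levels `0, 2, 1` onto `[0, m)`, `[m, 2m)`, `[2m, 3m)`,
with `π_B(x, 1) ≡ -2x` and `2 π_B(x, 2) ≡ -x (mod m)`. So the image of a type-two block at level
`0` or `2` has a sum that is a multiple of `m` and exceeds `2m`, every other block has sum at least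
`3m` by the level ranges, and `{(0,0), (0,1), (0,2)}` maps to `{0, 2m, m}`.
-/

open Finset

section BoseOp

variable {m : ℕ}

lemma isUnit_two_of_odd (hm : Odd m) : IsUnit (2 : ZMod m) :=
  (ZMod.isUnit_iff_coprime 2 m).2 (Nat.coprime_two_left.2 hm)

lemma eq_of_natCast_eq_of_lt {a b : ℕ} (ha : a < m) (hb : b < m) (h : (a : ZMod m) = b) :
    a = b := by
  rwa [ZMod.natCast_eq_natCast_iff', Nat.mod_eq_of_lt ha, Nat.mod_eq_of_lt hb] at h

lemma boseOp_lt (hm : 0 < m) (x y : ℕ) : boseOp m x y < m :=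
  Nat.mod_lt _ hm

lemma boseOp_comm (x y : ℕ) : boseOp m x y = boseOp m y x := by
  rw [boseOp, boseOp, Nat.add_comm x]

lemma two_mul_boseOp (hm : Odd m) (x y : ℕ) : 2 * (boseOp m x y : ZMod m) = x + y := by
  have half : 2 * ((m + 1) / 2) = m + 1 := by obtain ⟨k, rfl⟩ := hm; omega
  have half' : 2 * (((m + 1) / 2 : ℕ) : ZMod m) = 1 := by
    rw [← Nat.cast_ofNat, ← Nat.cast_mul, half, Nat.cast_succ, ZMod.natCast_self, zero_add]
  rw [boseOp, ZMod.natCast_mod, Nat.cast_mul, ← mul_assoc, half', one_mul, Nat.cast_add]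

lemma boseOp_eq_iff (hm : Odd m) {x y z : ℕ} (hz : z < m) :
    boseOp m x y = z ↔ (x + y : ZMod m) = 2 * z := by
  refine ⟨fun h => h ▸ (two_mul_boseOp hm x y).symm, fun h => ?_⟩
  refine eq_of_natCast_eq_of_lt (boseOp_lt hm.pos x y) hz
    ((isUnit_two_of_odd hm).mul_left_cancel ?_)
  rw [two_mul_boseOp hm, h]

lemma boseOp_self (hm : Odd m) {x : ℕ} (hx : x < m) : boseOp m x x = x :=
  (boseOp_eq_iff hm hx).2 (two_mul _).symm

lemma boseOp_left_cancel (hm : Odd m) {x y y' : ℕ} (hy : y < m) (hy' : y' < m)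
    (h : boseOp m x y = boseOp m x y') : y = y' := by
  refine eq_of_natCast_eq_of_lt hy hy' (add_left_cancel (a := (x : ZMod m)) ?_)
  rw [← two_mul_boseOp hm, ← two_mul_boseOp hm, h]

lemma boseOp_ne_left (hm : Odd m) {x y : ℕ} (hx : x < m) (hy : y < m) (hxy : x ≠ y) :
    boseOp m x y ≠ x := fun h =>
  hxy (boseOp_left_cancel hm hy hx (h.trans (boseOp_self hm hx).symm)).symm

lemma exists_boseOp_eq (hm : Odd m) {x z : ℕ} (hx : x < m) (hz : z < m) :
    ∃ y < m, boseOp m x y = z := by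
  refine ⟨(2 * z + (m - x)) % m, Nat.mod_lt _ hm.pos, (boseOp_eq_iff hm hz).2 ?_⟩
  rw [ZMod.natCast_mod, Nat.cast_add, Nat.cast_sub hx.le, ZMod.natCast_self]
  push_cast; ring

end BoseOp

section BoseMap

variable {m : ℕ}

def bosePoints (m : ℕ) : Finset (ℕ × ℕ) := range m ×ˢ range 3

lemma mem_bosePoints {x i : ℕ} : (x, i) ∈ bosePoints m ↔ x < m ∧ i < 3 := by
  simp [bosePoints]

lemma boseMap_zero (x : ℕ) : boseMap m (x, 0) = x := rfl

lemma boseMap_one (hm : Odd m) {x : ℕ} (hx : x < m) :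
    2 * m ≤ boseMap m (x, 1) ∧ boseMap m (x, 1) < 3 * m ∧
      (boseMap m (x, 1) : ZMod m) = -(2 * x) := by
  rcases eq_or_ne x 0 with rfl | hx0
  · simp [boseMap]; omega
  have hr : (2 * x) % m ≠ 0 := fun h => hx0 <| Nat.eq_zero_of_dvd_of_lt
    ((Nat.coprime_two_left.2 hm).symm.dvd_of_dvd_mul_left (Nat.dvd_of_mod_eq_zero h)) hx
  have hrm : (2 * x) % m < m := Nat.mod_lt _ hm.pos
  simp only [boseMap, one_ne_zero, if_false, if_true, hx0]
  refine ⟨by omega, by omega, ?_⟩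
  rw [Nat.cast_sub (by omega), ZMod.natCast_mod, Nat.cast_mul, ZMod.natCast_self]
  push_cast; ring

lemma boseMap_two (hm : Odd m) {x : ℕ} (hx : x < m) :
    m ≤ boseMap m (x, 2) ∧ boseMap m (x, 2) < 2 * m ∧
      2 * (boseMap m (x, 2) : ZMod m) = -x := by
  rcases eq_or_ne x 0 with rfl | hx0
  · simp [boseMap]; omega
  have := boseOp_lt hm.pos 0 (m - x)
  simp only [boseMap, if_neg (by decide : (2 : ℕ) ≠ 0), if_neg (by decide : (2 : ℕ) ≠ 1),
    if_neg hx0]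
  refine ⟨by omega, by omega, ?_⟩
  rw [Nat.cast_add, mul_add, two_mul_boseOp hm, Nat.cast_sub hx.le, ZMod.natCast_self]
  push_cast; ring

lemma boseMap_lt (hm : Odd m) {p : ℕ × ℕ} (hp : p ∈ bosePoints m) : boseMap m p < 3 * m := by
  obtain ⟨x, i⟩ := p
  obtain ⟨hx, hi⟩ := mem_bosePoints.1 hp
  interval_cases i
  · rw [boseMap_zero]; omega
  · exact (boseMap_one hm hx).2.1
  · have := (boseMap_two hm hx).2.1; omega

lemma boseMap_injOn (hm : Odd m) : Set.InjOn (boseMap m) (bosePoints m) := by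
  rintro ⟨x, i⟩ hp ⟨y, j⟩ hq h
  obtain ⟨hx, hi⟩ := mem_bosePoints.1 hp
  obtain ⟨hy, hj⟩ := mem_bosePoints.1 hq
  have hx1 := boseMap_one hm hx; have hx2 := boseMap_two hm hx
  have hy1 := boseMap_one hm hy; have hy2 := boseMap_two hm hy
  interval_cases i <;> interval_cases j <;>
    simp only [boseMap_zero, Prod.mk.injEq, and_true] at h ⊢ <;> try omega
  · refine eq_of_natCast_eq_of_lt hx hy
      ((isUnit_two_of_odd hm).mul_left_cancel (neg_inj.1 ?_))
    rw [← hx1.2.2, ← hy1.2.2, h]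
  · exact eq_of_natCast_eq_of_lt hx hy (neg_inj.1 (by rw [← hx2.2.2, ← hy2.2.2, h]))

lemma image_boseMap (hm : Odd m) : (bosePoints m).image (boseMap m) = range (3 * m) := by
  refine eq_of_subset_of_card_le (fun u hu => ?_) ?_
  · obtain ⟨p, hp, rfl⟩ := mem_image.1 hu
    exact mem_range.2 (boseMap_lt hm hp)
  · rw [card_range, card_image_of_injOn (boseMap_injOn hm), bosePoints, card_product,
      card_range, card_range, mul_comm]

end BoseMap

section BoseBlocks

variable {m : ℕ}

def typeOneBlock (x : ℕ) : Finset (ℕ × ℕ) := {(x, 0), (x, 1), (x, 2)}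

def typeTwoBlock (m x y i : ℕ) : Finset (ℕ × ℕ) :=
  {(x, i), (y, i), (boseOp m x y, (i + 1) % 3)}

lemma typeTwoBlock_comm (x y i : ℕ) : typeTwoBlock m x y i = typeTwoBlock m y x i := by
  rw [typeTwoBlock, typeTwoBlock, boseOp_comm, insert_comm]

lemma mem_boseBlocks {b : Finset (ℕ × ℕ)} :
    b ∈ boseBlocks m ↔ (∃ x < m, b = typeOneBlock x) ∨
      ∃ x < m, ∃ y < m, x ≠ y ∧ ∃ i < 3, b = typeTwoBlock m x y i := by
  simp only [boseBlocks, mem_union, mem_image, mem_range, mem_product, mem_filter, Prod.exists,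
    typeOneBlock, typeTwoBlock, eq_comm (a := b)]
  refine or_congr Iff.rfl ⟨?_, ?_⟩
  · rintro ⟨x, y, i, ⟨⟨⟨hx, hy⟩, hxy⟩, hi⟩, rfl⟩
    exact ⟨x, hx, y, hy, hxy.ne, i, hi, rfl⟩
  · rintro ⟨x, hx, y, hy, hxy, i, hi, rfl⟩
    rcases hxy.lt_or_gt with hxy | hyx
    · exact ⟨x, y, i, ⟨⟨⟨hx, hy⟩, hxy⟩, hi⟩, rfl⟩
    · exact ⟨y, x, i, ⟨⟨⟨hy, hx⟩, hyx⟩, hi⟩, typeTwoBlock_comm (m := m) y x i⟩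

lemma typeOneBlock_mem {x : ℕ} (hx : x < m) : typeOneBlock x ∈ boseBlocks m :=
  mem_boseBlocks.2 (.inl ⟨x, hx, rfl⟩)

lemma typeTwoBlock_mem {x y i : ℕ} (hx : x < m) (hy : y < m) (hxy : x ≠ y) (hi : i < 3) :
    typeTwoBlock m x y i ∈ boseBlocks m :=
  mem_boseBlocks.2 (.inr ⟨x, hx, y, hy, hxy, i, hi, rfl⟩)

lemma subset_bosePoints {b : Finset (ℕ × ℕ)} (hb : b ∈ boseBlocks m) : b ⊆ bosePoints m := by
  rcases mem_boseBlocks.1 hb with ⟨x, hx, rfl⟩ | ⟨x, hx, y, hy, -, i, hi, rfl⟩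
  · simp [typeOneBlock, insert_subset_iff, mem_bosePoints, hx]
  · simp [typeTwoBlock, insert_subset_iff, mem_bosePoints, hx, hy, hi,
      boseOp_lt ((Nat.zero_le x).trans_lt hx), Nat.mod_lt]

lemma card_of_mem_boseBlocks {b : Finset (ℕ × ℕ)} (hb : b ∈ boseBlocks m) : b.card = 3 := by
  rcases mem_boseBlocks.1 hb with ⟨x, -, rfl⟩ | ⟨x, -, y, -, hxy, i, -, rfl⟩
  · simp [typeOneBlock]
  · rw [typeTwoBlock, card_eq_three]
    refine ⟨_, _, _, ?_, ?_, ?_, rfl⟩ <;> simp [hxy] <;> omega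

end BoseBlocks

section PairUniqueness

variable {m : ℕ} {b : Finset (ℕ × ℕ)}

lemma eq_typeTwoBlock_of_mem (hb : b ∈ boseBlocks m) {x y i : ℕ} (hxy : x ≠ y)
    (hx : (x, i) ∈ b) (hy : (y, i) ∈ b) : b = typeTwoBlock m x y i := by
  rcases mem_boseBlocks.1 hb with ⟨a, -, rfl⟩ | ⟨a, -, c, -, -, k, -, rfl⟩
  · simp only [typeOneBlock, mem_insert, mem_singleton, Prod.mk.injEq] at hx hy
    omega
  · simp only [typeTwoBlock, mem_insert, mem_singleton, Prod.mk.injEq] at hx hy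
    obtain ⟨rfl, rfl, rfl⟩ | ⟨rfl, rfl, rfl⟩ :
        (x = a ∧ y = c ∧ i = k) ∨ (x = c ∧ y = a ∧ i = k) := by
      omega
    · rfl
    · exact typeTwoBlock_comm _ _ _

lemma eq_typeOneBlock_of_mem (hm : Odd m) (hb : b ∈ boseBlocks m) {x i j : ℕ} (hij : i ≠ j)
    (hi : (x, i) ∈ b) (hj : (x, j) ∈ b) : b = typeOneBlock x := by
  rcases mem_boseBlocks.1 hb with ⟨a, -, rfl⟩ | ⟨a, ha, c, hc, hac, k, -, rfl⟩
  · simp only [typeOneBlock, mem_insert, mem_singleton, Prod.mk.injEq] at hi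
    obtain rfl : x = a := by omega
    rfl
  · have hca := boseOp_ne_left hm ha hc hac
    have hcc := boseOp_comm (m := m) a c ▸ boseOp_ne_left hm hc ha hac.symm
    simp only [typeTwoBlock, mem_insert, mem_singleton, Prod.mk.injEq] at hi hj
    omega

lemma eq_typeTwoBlock_of_mem_succ (hm : Odd m) (hb : b ∈ boseBlocks m) {x y t i : ℕ}
    (hxy : x ≠ y) (ht : t < m) (hxt : boseOp m x t = y) (hx : (x, i) ∈ b)
    (hy : (y, (i + 1) % 3) ∈ b) : b = typeTwoBlock m x t i := by
  rcases mem_boseBlocks.1 hb with ⟨a, -, rfl⟩ | ⟨a, ha, c, hc, -, k, -, rfl⟩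
  · simp only [typeOneBlock, mem_insert, mem_singleton, Prod.mk.injEq] at hx hy
    omega
  · simp only [typeTwoBlock, mem_insert, mem_singleton, Prod.mk.injEq] at hx hy
    obtain ⟨rfl, rfl, hac⟩ | ⟨rfl, rfl, hac⟩ :
        (x = a ∧ i = k ∧ y = boseOp m a c) ∨ (x = c ∧ i = k ∧ y = boseOp m a c) := by
      omega
    · obtain rfl := boseOp_left_cancel hm hc ht (hac.symm.trans hxt.symm)
      rfl
    · rw [boseOp_comm] at hac
      obtain rfl := boseOp_left_cancel hm ha ht (hac.symm.trans hxt.symm)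
      exact typeTwoBlock_comm _ _ _

lemma existsUnique_boseBlocks (hm : Odd m) {p q : ℕ × ℕ} (hp : p ∈ bosePoints m)
    (hq : q ∈ bosePoints m) (hpq : p ≠ q) : ∃! b, b ∈ boseBlocks m ∧ p ∈ b ∧ q ∈ b := by
  obtain ⟨x, i⟩ := p
  obtain ⟨y, j⟩ := q
  wlog hsucc : ¬ (x ≠ y ∧ i = (j + 1) % 3) generalizing x y i j
  · simpa only [and_comm (a := (y, j) ∈ _)] using this y j hq x i hp hpq.symm (by omega)
  obtain ⟨hx, hi⟩ := mem_bosePoints.1 hp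
  obtain ⟨hy, hj⟩ := mem_bosePoints.1 hq
  rcases eq_or_ne i j with rfl | hij
  · have hxy : x ≠ y := by rintro rfl; exact hpq rfl
    exact ⟨typeTwoBlock m x y i, ⟨typeTwoBlock_mem hx hy hxy hi, by simp [typeTwoBlock]⟩,
      fun b ⟨hb, hxb, hyb⟩ => eq_typeTwoBlock_of_mem hb hxy hxb hyb⟩
  rcases eq_or_ne x y with rfl | hxy
  · exact ⟨typeOneBlock x, ⟨typeOneBlock_mem hx, by simp [typeOneBlock]; omega⟩,
      fun b ⟨hb, hib, hjb⟩ => eq_typeOneBlock_of_mem hm hb hij hib hjb⟩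
  obtain rfl : j = (i + 1) % 3 := by omega
  obtain ⟨t, ht, hxt⟩ := exists_boseOp_eq hm hx hy
  have hxt' : x ≠ t := by rintro rfl; exact hxy (boseOp_self hm hx ▸ hxt)
  exact ⟨typeTwoBlock m x t i, ⟨typeTwoBlock_mem hx ht hxt' hi, by simp [typeTwoBlock, hxt]⟩,
    fun b ⟨hb, hxb, hyb⟩ => eq_typeTwoBlock_of_mem_succ hm hb hxy ht hxt hxb hyb⟩

end PairUniqueness

section MinSum

variable {m : ℕ}

lemma three_mul_le_of_natCast_eq_zero {s : ℕ} (h : (s : ZMod m) = 0) (hs : 2 * m < s) :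
    3 * m ≤ s := by
  obtain ⟨k, rfl⟩ := (ZMod.natCast_eq_zero_iff s m).1 h
  have hk : 2 < k := Nat.lt_of_mul_lt_mul_left (a := m) (by rwa [mul_comm m 2])
  rw [mul_comm 3 m]
  exact Nat.mul_le_mul_left m hk

lemma three_mul_le_sum_boseMap (hm : Odd m) {b : Finset (ℕ × ℕ)} (hb : b ∈ boseBlocks m) :
    3 * m ≤ ∑ p ∈ b, boseMap m p := by
  rcases mem_boseBlocks.1 hb with ⟨x, hx, rfl⟩ | ⟨x, hx, y, hy, hxy, i, hi, rfl⟩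
  · rw [typeOneBlock, sum_insert (by simp), sum_pair (by simp), boseMap_zero]
    have := (boseMap_one hm hx).1
    have := (boseMap_two hm hx).1
    omega
  have hz := boseOp_lt hm.pos x y
  have hxyz := two_mul_boseOp hm x y
  rw [typeTwoBlock, sum_insert (by simp; omega), sum_pair (by simp; omega)]
  interval_cases i
  · obtain ⟨hz1, -, hz1'⟩ := boseMap_one hm hz
    rw [show (0 + 1) % 3 = 1 from rfl, boseMap_zero, boseMap_zero]
    refine three_mul_le_of_natCast_eq_zero ?_ (by omega)
    push_cast
    linear_combination hz1' - hxyz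
  · have := (boseMap_one hm hx).1
    have := (boseMap_one hm hy).1
    have := (boseMap_two hm hz).1
    omega
  · obtain ⟨hx2, -, hx2'⟩ := boseMap_two hm hx
    obtain ⟨hy2, -, hy2'⟩ := boseMap_two hm hy
    have hne : boseMap m (x, 2) ≠ boseMap m (y, 2) := fun h => hxy (congrArg Prod.fst <|
      boseMap_injOn hm (mem_bosePoints.2 ⟨hx, by omega⟩) (mem_bosePoints.2 ⟨hy, by omega⟩) h)
    rw [show (2 + 1) % 3 = 0 from rfl, boseMap_zero]
    refine three_mul_le_of_natCast_eq_zero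
      ((isUnit_two_of_odd hm).mul_left_cancel ?_) (by omega)
    push_cast
    linear_combination hx2' + hy2' + hxyz

lemma sum_boseMap_typeOneBlock_zero : ∑ p ∈ typeOneBlock 0, boseMap m p = 3 * m := by
  rw [typeOneBlock, sum_insert (by simp), sum_pair (by simp)]
  simp [boseMap]
  ring

end MinSum

lemma isSTS_image {α : Type*} [DecidableEq α] {P : Finset α} {B : Finset (Finset α)}
    {f : α → ℕ} {n : ℕ} (hf : Set.InjOn f P) (hfP : P.image f = range n)
    (hB : ∀ b ∈ B, b ⊆ P ∧ b.card = 3)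
    (hpair : ∀ p ∈ P, ∀ q ∈ P, p ≠ q → ∃! b, b ∈ B ∧ p ∈ b ∧ q ∈ b) :
    IsSTS n (B.image (image f)) := by
  have mem_image_iff {b : Finset α} (hb : b ∈ B) {p : α} (hp : p ∈ P) :
      f p ∈ b.image f ↔ p ∈ b := by
    refine ⟨fun h => ?_, mem_image_of_mem f⟩
    obtain ⟨p', hp', hfp⟩ := mem_image.1 h
    rwa [← hf ((hB b hb).1 hp') hp hfp]
  refine ⟨fun b' hb' => ?_, fun T hT hT2 => ?_⟩
  · obtain ⟨b, hb, rfl⟩ := mem_image.1 hb'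
    exact ⟨hfP ▸ image_subset_image (hB b hb).1,
      (card_image_of_injOn (hf.mono (coe_subset.2 (hB b hb).1))).trans (hB b hb).2⟩
  obtain ⟨u, v, huv, rfl⟩ := card_eq_two.1 hT2
  rw [← hfP, insert_subset_iff, singleton_subset_iff] at hT
  obtain ⟨p, hp, rfl⟩ := mem_image.1 hT.1
  obtain ⟨q, hq, rfl⟩ := mem_image.1 hT.2
  obtain ⟨b, ⟨hb, hpb, hqb⟩, huniq⟩ := hpair p hp q hq (ne_of_apply_ne f huv)
  refine ⟨b.image f, ⟨mem_image_of_mem _ hb, ?_⟩, fun c' ⟨hc', hsub⟩ => ?_⟩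
  · rw [insert_subset_iff, singleton_subset_iff, mem_image_iff hb hp, mem_image_iff hb hq]
    exact ⟨hpb, hqb⟩
  obtain ⟨c, hc, rfl⟩ := mem_image.1 hc'
  rw [insert_subset_iff, singleton_subset_iff, mem_image_iff hc hp, mem_image_iff hc hq] at hsub
  rw [huniq c ⟨hc, hsub⟩]

theorem bose_sts_minSum_eq_general (n : ℕ) (hmod : n % 6 = 3) :
    IsSTS n ((boseBlocks (n / 3)).image fun b => b.image (boseMap (n / 3))) ∧
    (∀ b ∈ (boseBlocks (n / 3)).image fun b => b.image (boseMap (n / 3)),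
      n ≤ ∑ x ∈ b, x) ∧
    (∃ b ∈ (boseBlocks (n / 3)).image fun b => b.image (boseMap (n / 3)),
      ∑ x ∈ b, x = n) := by
  obtain ⟨m, rfl⟩ : ∃ m, n = 3 * m := ⟨n / 3, by omega⟩
  have hm : Odd m := Nat.odd_iff.2 (by omega)
  rw [Nat.mul_div_cancel_left m three_pos]
  have sum_image_eq {b : Finset (ℕ × ℕ)} (hb : b ∈ boseBlocks m) :
      ∑ u ∈ b.image (boseMap m), u = ∑ p ∈ b, boseMap m p :=
    sum_image ((boseMap_injOn hm).mono (coe_subset.2 (subset_bosePoints hb)))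
  have h0 : typeOneBlock 0 ∈ boseBlocks m := typeOneBlock_mem hm.pos
  refine ⟨isSTS_image (boseMap_injOn hm) (image_boseMap hm)
      (fun b hb => ⟨subset_bosePoints hb, card_of_mem_boseBlocks hb⟩)
      (fun p hp q hq => existsUnique_boseBlocks hm hp hq), fun b' hb' => ?_,
    ⟨_, mem_image_of_mem _ h0, by rw [sum_image_eq h0, sum_boseMap_typeOneBlock_zero]⟩⟩
  obtain ⟨b, hb, rfl⟩ := mem_image.1 hb'
  rw [sum_image_eq hb]
  exact three_mul_le_sum_boseMap hm hb

/-- For every `n ≥ 9` with `n ≡ 3 (mod 6)`, the image under the Bose Mapping of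
the block set of the Bose Construction is a Steiner triple system on
`{0,…,n-1}` whose min-sum equals `n`. -/
theorem bose_sts_minSum_eq (n : ℕ) (hn : 9 ≤ n) (hmod : n % 6 = 3) :
    IsSTS n ((boseBlocks (n / 3)).image fun b => b.image (boseMap (n / 3))) ∧
    (∀ b ∈ (boseBlocks (n / 3)).image fun b => b.image (boseMap (n / 3)),
      n ≤ ∑ x ∈ b, x) ∧
    (∃ b ∈ (boseBlocks (n / 3)).image fun b => b.image (boseMap (n / 3)),
      ∑ x ∈ b, x = n) :=
  bose_sts_minSum_eq_general n hmod
end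

section
/- Let n = 3m+1 ≥ 7 with m even. The Skolem Mapping π_S is a bijection from the point set X' = {∞} ∪ {(x,i) : x ∈ {0,...,m-1}, i ∈ {0,1,2}} to {0,1,...,n-1}; moreover π_S((x,0)) ∈ {0,...,m-1}, π_S(∞) = m, π_S((x,2)) ∈ {m+1,...,2m}, and π_S((x,1)) ∈ {2m+1,...,3m} for every x ∈ {0,...,m-1}. -/
/-- The Skolem operation on `{0,1,…,m-1}` (for `m` even):
`x ⊕_s y = ((x+y) mod m)/2` if `(x+y) mod m` is even, and
`x ⊕_s y = (((x+y) mod m)+m-1)/2` if `(x+y) mod m` is odd. -/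
def skolemOp (m x y : ℕ) : ℕ :=
  if Even ((x + y) % m) then (x + y) % m / 2 else ((x + y) % m + m - 1) / 2

/-- The unique `y` with `(m-1) ⊕_s y = x` (used to define `π_S((x,1))`):
`y = 0` if `x = m-1`, `y = 2x+1` if `x < m/2`, and `y = 2x+2-m` otherwise. -/
def skolemInv (m x : ℕ) : ℕ :=
  if x = m - 1 then 0 else if x < m / 2 then 2 * x + 1 else 2 * x + 2 - m

/-- The Skolem Mapping `π_S` on the point set
`X' = {∞} ∪ {(x,i) : x ∈ {0,…,m-1}, i ∈ {0,1,2}}` (with `∞` encoded as `none`):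
`(x,0) ↦ m-1-x`; `(x,1) ↦ 2m+1` if `x = m/2-1`, and `(x,1) ↦ 2m+2+y` where
`x = (m-1) ⊕_s y ≠ m/2-1`; `(x,2) ↦ m+1+(0 ⊕_s x)`; `∞ ↦ m`. -/
def skolemMap (m : ℕ) : Option (ℕ × ℕ) → ℕ
  | none => m
  | some p =>
    if p.2 = 0 then m - 1 - p.1
    else if p.2 = 1 then
      (if p.1 = m / 2 - 1 then 2 * m + 1 else 2 * m + 2 + skolemInv m p.1)
    else m + 1 + skolemOp m 0 p.1


/-!
`π_S` maps each level of `X'` bijectively onto a block of consecutive integers, and the blocks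
`[0, m)`, `{m}`, `[m+1, 2m]`, `[2m+1, 3m]` partition `[0, 3m]`. On level 0 it is the reflection
`x ↦ m-1-x`. On level 2 it is `m+1` plus `0 ⊕_s x`, which halves the even `x` onto `[0, m/2)` and
sends the odd `x` onto `[m/2, m)` by `x ↦ (x+m-1)/2`. On level 1, `skolemInv` sends `m-1` to `0`,
the other `x < m/2` onto the odd and the other `x ≥ m/2` onto the even numbers of `[1, m-2]`, so
the points `x ≠ m/2-1` fill `[2m+2, 3m]` and the exceptional point `m/2-1` takes `2m+1`.
-/

open Set

theorem Set.BijOn.union_of_disjoint {α β : Type*} {f : α → β} {s₁ s₂ : Set α} {t₁ t₂ : Set β}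
    (h₁ : BijOn f s₁ t₁) (h₂ : BijOn f s₂ t₂) (ht : Disjoint t₁ t₂) :
    BijOn f (s₁ ∪ s₂) (t₁ ∪ t₂) := by
  have hs : Disjoint s₁ s₂ := ht.preimage f |>.mono h₁.mapsTo h₂.mapsTo
  refine h₁.union h₂ ((injOn_union hs).2 ⟨h₁.injOn, h₂.injOn, fun x hx y hy => ?_⟩)
  exact ht.ne_of_mem (h₁.mapsTo hx) (h₂.mapsTo hy)

theorem bijOn_const_add_Iio (a b : ℕ) : BijOn (a + ·) (Iio b) (Ico a (a + b)) := by
  refine ⟨fun x hx => ?_, (add_right_injective a).injOn, fun y hy => ⟨y - a, ?_, ?_⟩⟩ <;>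
    simp only [mem_Iio, mem_Ico] at * <;> omega

theorem skolemOp_zero_of_lt {m x : ℕ} (hx : x < m) :
    skolemOp m 0 x = if x % 2 = 0 then x / 2 else (x + m - 1) / 2 := by
  simp [skolemOp, Nat.mod_eq_of_lt hx, Nat.even_iff]

theorem skolemOp_zero_bijOn {m : ℕ} (hm : Even m) : BijOn (skolemOp m 0) (Iio m) (Iio m) := by
  obtain ⟨k, rfl⟩ := hm
  refine ⟨fun x hx => ?_, fun x hx y hy hxy => ?_, fun y hy => ?_⟩
  · simp only [mem_Iio] at hx ⊢
    rw [skolemOp_zero_of_lt hx]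
    split_ifs <;> omega
  · simp only [mem_Iio] at hx hy
    rw [skolemOp_zero_of_lt hx, skolemOp_zero_of_lt hy] at hxy
    split_ifs at hxy <;> omega
  · simp only [mem_Iio] at hy
    obtain ⟨x, hxy⟩ : ∃ x, x = if y < k then 2 * y else 2 * y + 1 - (k + k) := ⟨_, rfl⟩
    have hx : x < k + k := by split_ifs at hxy <;> omega
    refine ⟨x, hx, ?_⟩
    rw [skolemOp_zero_of_lt hx]
    split_ifs at hxy ⊢ <;> omega

theorem skolemInv_bijOn {m : ℕ} (hm : Even m) :
    BijOn (skolemInv m) (Iio m \ {m / 2 - 1}) (Iio (m - 1)) := by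
  obtain ⟨k, rfl⟩ := hm
  refine ⟨fun x hx => ?_, fun x hx y hy hxy => ?_, fun y hy => ?_⟩
  · simp only [mem_sdiff, mem_Iio, mem_singleton_iff] at hx ⊢
    unfold skolemInv
    split_ifs <;> omega
  · simp only [mem_sdiff, mem_Iio, mem_singleton_iff] at hx hy
    unfold skolemInv at hxy
    split_ifs at hxy <;> omega
  · simp only [mem_Iio] at hy
    obtain ⟨x, hxy⟩ : ∃ x,
        x = if y = 0 then k + k - 1 else if y % 2 = 1 then (y - 1) / 2 else (y + k + k - 2) / 2 :=
      ⟨_, rfl⟩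
    refine ⟨x, ?_, ?_⟩
    · simp only [mem_sdiff, mem_Iio, mem_singleton_iff]
      split_ifs at hxy <;> omega
    · unfold skolemInv
      split_ifs at hxy ⊢ <;> omega

theorem bijOn_skolemMap_image_iff {m i : ℕ} {t : Set ℕ} :
    BijOn (skolemMap m) ((fun x => some (x, i)) '' Iio m) t ↔
      BijOn (fun x => skolemMap m (some (x, i))) (Iio m) t :=
  (bijOn_comp_iff ((Option.some_injective _).comp (Prod.mk_left_injective i)).injOn).symm

theorem skolemMap_level0_bijOn (m : ℕ) :
    BijOn (fun x => skolemMap m (some (x, 0))) (Iio m) (Iio m) := by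
  refine ⟨fun x hx => ?_, fun x hx y hy hxy => ?_, fun y hy => ⟨m - 1 - y, ?_, ?_⟩⟩ <;>
    simp only [skolemMap, mem_Iio, if_true] at * <;> omega

theorem skolemMap_level1_bijOn {m : ℕ} (hm : Even m) (hm0 : 0 < m) :
    BijOn (fun x => skolemMap m (some (x, 1))) (Iio m) (Ico (2 * m + 1) (3 * m + 1)) := by
  have hrest : BijOn (fun x => skolemMap m (some (x, 1))) (Iio m \ {m / 2 - 1})
      (Ico (2 * m + 1 + 1) (3 * m + 1)) := by
    have h := (bijOn_const_add_Iio (2 * m + 2) (m - 1)).comp (skolemInv_bijOn hm)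
    rw [show 2 * m + 2 + (m - 1) = 3 * m + 1 by omega] at h
    refine h.congr fun x hx => ?_
    simp only [mem_sdiff, mem_singleton_iff] at hx
    simp [skolemMap, hx.2]
  have hc : skolemMap m (some (m / 2 - 1, 1)) = 2 * m + 1 := by simp [skolemMap]
  have h := hrest.insert (a := m / 2 - 1) (by simp [hc])
  rwa [insert_sdiff_singleton, insert_eq_of_mem (by simp only [mem_Iio]; omega), hc,
    insert_Ico_add_one_left_eq_Ico (by omega)] at h

theorem skolemMap_level2_bijOn {m : ℕ} (hm : Even m) :
    BijOn (fun x => skolemMap m (some (x, 2))) (Iio m) (Ico (m + 1) (2 * m + 1)) := by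
  have h := (bijOn_const_add_Iio (m + 1) m).comp (skolemOp_zero_bijOn hm)
  rw [show m + 1 + m = 2 * m + 1 by omega] at h
  exact h.congr fun x _ => rfl

theorem skolemMap_bijOn {m : ℕ} (hm : Even m) (hm0 : 0 < m) :
    BijOn (skolemMap m) {p | p = none ∨ ∃ x i : ℕ, x < m ∧ i < 3 ∧ p = some (x, i)}
      (Iio (3 * m + 1)) := by
  have h0 := bijOn_skolemMap_image_iff.2 (skolemMap_level0_bijOn m)
  have h1 := bijOn_skolemMap_image_iff.2 (skolemMap_level1_bijOn hm hm0)
  have h2 := bijOn_skolemMap_image_iff.2 (skolemMap_level2_bijOn hm)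
  have h := ((h0.union_of_disjoint h2 ?_).union_of_disjoint h1 ?_).insert (a := none) ?_
  · convert h using 1
    · ext (_ | ⟨x, i⟩)
      · simp
      · simp only [exists_and_left, mem_ofPred_eq, reduceCtorEq, Option.some.injEq,
          Prod.mk.injEq, exists_eq_right_right', false_or, mem_insert_iff, mem_union, mem_image,
          mem_Iio, ↓existsAndEq, true_and]
        omega
    · ext k
      simp only [mem_Iio, skolemMap, mem_insert_iff, mem_union, mem_Ico]
      omega
  · exact disjoint_left.2 fun k hk hk' => by simp only [mem_Iio, mem_Ico] at hk hk'; omega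
  · exact disjoint_left.2 fun k hk hk' => by
      simp only [mem_union, mem_Iio, mem_Ico] at hk hk'; omega
  · simp only [skolemMap, mem_union, mem_Iio, mem_Ico]; omega

/-- The Skolem Mapping is a bijection from
`X' = {∞} ∪ {(x,i) : x ∈ {0,…,m-1}, i ∈ {0,1,2}}` onto `{0,1,…,n-1}`
(`n = 3m+1`), with `π_S((x,0)) ∈ {0,…,m-1}`, `π_S(∞) = m`,
`π_S((x,2)) ∈ {m+1,…,2m}` and `π_S((x,1)) ∈ {2m+1,…,3m}`. -/
theorem skolemMap_bijective (m n : ℕ) (hm : Even m) (hm2 : 2 ≤ m) (hn : n = 3 * m + 1) :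
    Set.BijOn (skolemMap m)
      {p : Option (ℕ × ℕ) | p = none ∨ ∃ x i : ℕ, x < m ∧ i < 3 ∧ p = some (x, i)}
      (Set.Iio n) ∧
    (∀ x < m, skolemMap m (some (x, 0)) < m) ∧
    skolemMap m none = m ∧
    (∀ x < m, m + 1 ≤ skolemMap m (some (x, 2)) ∧ skolemMap m (some (x, 2)) ≤ 2 * m) ∧
    (∀ x < m, 2 * m + 1 ≤ skolemMap m (some (x, 1)) ∧ skolemMap m (some (x, 1)) ≤ 3 * m) := by
  subst hn
  refine ⟨skolemMap_bijOn hm (by omega), fun x hx => (skolemMap_level0_bijOn m).mapsTo hx, rfl,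
    fun x hx => ?_, fun x hx => ?_⟩
  · have h := (skolemMap_level2_bijOn hm).mapsTo hx
    simp only [mem_Ico] at h
    omega
  · have h := (skolemMap_level1_bijOn hm (by omega)).mapsTo hx
    simp only [mem_Ico] at h
    omega
end

section
/- Let n = 3m+1 ≥ 7 with m even and let π_S be the Skolem Mapping. Then for every 0 ≤ x < y ≤ m-1, π_S((x,0)) + π_S((y,0)) + π_S((x ⊕_s y, 1)) ≥ n. -/
/-! Since `π_S((x,0)) + π_S((y,0)) = 2m - 2 - (x + y)`, the case `x + y ≤ m - 2` follows from
`π_S((z,1)) ≥ 2m + 1`. Otherwise `(x + y) mod m ≠ m - 2`, so `x ⊕_s y ≠ m/2 - 1`, and as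
`(m - 1) ⊕_s ((x + y + 1) mod m) = x ⊕_s y` we get `π_S((x ⊕_s y, 1)) = 2m + 2 + (x + y + 1 - m)`:
the sum is exactly `n`. -/

section
variable {m : ℕ}

lemma skolemMap_some_zero (x : ℕ) : skolemMap m (some (x, 0)) = m - 1 - x := rfl

lemma skolemMap_some_one (z : ℕ) :
    skolemMap m (some (z, 1)) = if z = m / 2 - 1 then 2 * m + 1 else 2 * m + 2 + skolemInv m z :=
  rfl

lemma two_mul_add_one_le_skolemMap_some_one (z : ℕ) : 2 * m + 1 ≤ skolemMap m (some (z, 1)) := by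
  rw [skolemMap_some_one]
  split_ifs <;> omega

lemma Nat.add_one_mod_of_lt {s n : ℕ} (hs : s < n) : (s + 1) % n = if s + 1 = n then 0 else s + 1 := by
  split_ifs with h
  · rw [h, Nat.mod_self]
  · exact Nat.mod_eq_of_lt (by omega)

-- `skolemInv` inverts `(m - 1) ⊕_s ·`, and `(m - 1) + (x + y + 1) ≡ x + y [MOD m]`.
lemma skolemInv_skolemOp (hm : Even m) (hm0 : 0 < m) (x y : ℕ) :
    skolemInv m (skolemOp m x y) = (x + y + 1) % m := by
  obtain ⟨k, rfl⟩ := hm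
  have hs : (x + y) % (k + k) < k + k := Nat.mod_lt _ hm0
  rw [Nat.add_mod, Nat.one_mod_eq_one.mpr (by omega), Nat.add_one_mod_of_lt hs]
  unfold skolemInv skolemOp
  set s := (x + y) % (k + k)
  rcases Nat.even_or_odd s with hev | hodd
  · rw [if_pos hev]
    obtain ⟨j, hj⟩ := hev
    split_ifs <;> omega
  · obtain ⟨j, hj⟩ := hodd
    rw [if_neg (Nat.not_even_iff_odd.mpr ⟨j, hj⟩)]
    split_ifs <;> omega

lemma skolemOp_eq_half_sub_one_iff (hm : Even m) (hm0 : 0 < m) (x y : ℕ) :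
    skolemOp m x y = m / 2 - 1 ↔ (x + y) % m = m - 2 := by
  obtain ⟨k, rfl⟩ := hm
  have hs : (x + y) % (k + k) < k + k := Nat.mod_lt _ hm0
  unfold skolemOp
  set s := (x + y) % (k + k)
  rcases Nat.even_or_odd s with hev | hodd
  · rw [if_pos hev]
    obtain ⟨j, hj⟩ := hev
    omega
  · obtain ⟨j, hj⟩ := hodd
    rw [if_neg (Nat.not_even_iff_odd.mpr ⟨j, hj⟩)]
    omega

lemma skolemMap_some_skolemOp_one (hm : Even m) (hm0 : 0 < m) {x y : ℕ}
    (h : (x + y) % m ≠ m - 2) :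
    skolemMap m (some (skolemOp m x y, 1)) = 2 * m + 2 + (x + y + 1) % m := by
  rw [skolemMap_some_one, if_neg (mt (skolemOp_eq_half_sub_one_iff hm hm0 x y).mp h),
    skolemInv_skolemOp hm hm0]
end

theorem skolemMap_type2_sum_ge_01_general (m n : ℕ) (hm : Even m)
    (hn : n = 3 * m + 1) :
    ∀ x y : ℕ, x < y → y ≤ m - 1 →
      n ≤ skolemMap m (some (x, 0)) + skolemMap m (some (y, 0)) +
        skolemMap m (some (skolemOp m x y, 1)) := by
  intro x y hxy hy
  have hm0 : 0 < m := by omega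
  rw [skolemMap_some_zero, skolemMap_some_zero, hn]
  rcases Nat.lt_or_ge (x + y) (m - 1) with hsmall | hlarge
  · have := two_mul_add_one_le_skolemMap_some_one (m := m) (skolemOp m x y)
    omega
  · have hrem : (x + y + 1) % m = x + y + 1 - m := by
      rw [Nat.mod_eq_sub_mod (by omega), Nat.mod_eq_of_lt (by omega)]
    have hne : (x + y) % m ≠ m - 2 := by
      intro h
      have hsucc := Nat.add_one_mod_of_lt (Nat.mod_lt (x + y) hm0)
      rw [Nat.mod_add_mod, h, hrem] at hsucc
      split_ifs at hsucc <;> omega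
    rw [skolemMap_some_skolemOp_one hm hm0 hne, hrem]
    omega

/-- For every `0 ≤ x < y ≤ m-1`,
`π_S((x,0)) + π_S((y,0)) + π_S((x ⊕_s y, 1)) ≥ n` (`n = 3m+1`). -/
theorem skolemMap_type2_sum_ge_01 (m n : ℕ) (hm : Even m) (hm2 : 2 ≤ m)
    (hn : n = 3 * m + 1) :
    ∀ x y : ℕ, x < y → y ≤ m - 1 →
      n ≤ skolemMap m (some (x, 0)) + skolemMap m (some (y, 0)) +
        skolemMap m (some (skolemOp m x y, 1)) :=
  skolemMap_type2_sum_ge_01_general m n hm hn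
end

section
/- Let n = 3m+1 ≥ 7 with m even and let π_S be the Skolem Mapping. Then for every 0 ≤ x ≤ m/2-1, π_S(∞) + π_S((x+m/2, 0)) + π_S((x,1)) ≥ n. -/
theorem two_mul_add_one_le_skolemMap_snd_one (m x : ℕ) :
    2 * m + 1 ≤ skolemMap m (some (x, 1)) := by
  simp only [skolemMap, one_ne_zero, if_false]
  split_ifs <;> omega

theorem skolemMap_type3_sum_ge_general (m n : ℕ)
    (hn : n = 3 * m + 1) :
    ∀ x : ℕ, x ≤ m / 2 - 1 →
      n ≤ skolemMap m none + skolemMap m (some (x + m / 2, 0)) +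
        skolemMap m (some (x, 1)) := by
  intro x _
  have h1 := two_mul_add_one_le_skolemMap_snd_one m x
  rw [hn, skolemMap]
  omega

/-- For every `0 ≤ x ≤ m/2 - 1`,
`π_S(∞) + π_S((x+m/2, 0)) + π_S((x,1)) ≥ n` (`n = 3m+1`). -/
theorem skolemMap_type3_sum_ge (m n : ℕ) (hm : Even m) (hm2 : 2 ≤ m)
    (hn : n = 3 * m + 1) :
    ∀ x : ℕ, x ≤ m / 2 - 1 →
      n ≤ skolemMap m none + skolemMap m (some (x + m / 2, 0)) +
        skolemMap m (some (x, 1)) :=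
  skolemMap_type3_sum_ge_general m n hn
end

section
/- For every n ≥ 7 with n ≡ 1 (mod 6), the image under the Skolem Mapping of the block set of the Skolem Construction is a Steiner triple system on {0,1,...,n-1} whose min-sum equals n. -/
/-- The block set of the Skolem Construction on the point set
`X' = {∞} ∪ {(x,i) : x ∈ {0,…,m-1}, i ∈ {0,1,2}}` (with `∞` encoded as `none`):
Type 1 blocks `{(x,0),(x,1),(x,2)}` for `x ∈ {0,…,m/2-1}`;
Type 2 blocks `{(x,i),(y,i),(x ⊕_s y, (i+1) mod 3)}` for `0 ≤ x < y ≤ m-1`,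
`i ∈ {0,1,2}`; Type 3 blocks `{∞,(x+m/2,i),(x,(i+1) mod 3)}` for
`x ∈ {0,…,m/2-1}`, `i ∈ {0,1,2}`. -/
def skolemBlocks (m : ℕ) : Finset (Finset (Option (ℕ × ℕ))) :=
  ((Finset.range (m / 2)).image fun x =>
    ({some (x, 0), some (x, 1), some (x, 2)} : Finset (Option (ℕ × ℕ)))) ∪
  ((((Finset.range m ×ˢ Finset.range m).filter fun p => p.1 < p.2) ×ˢ Finset.range 3).image
    fun q => ({some (q.1.1, q.2), some (q.1.2, q.2),
      some (skolemOp m q.1.1 q.1.2, (q.2 + 1) % 3)} : Finset (Option (ℕ × ℕ)))) ∪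
  ((Finset.range (m / 2) ×ˢ Finset.range 3).image
    fun q => ({none, some (q.1 + m / 2, q.2), some (q.1, (q.2 + 1) % 3)} :
      Finset (Option (ℕ × ℕ))))

/-!
Every pair of points of `X'` lies in some block of the Skolem construction: two points of one
level in a Type 2 block, a point and `∞` in a Type 3 block, and `(u, i)`, `(v, i + 1)` in the
Type 2 block of `u` and `w`, where `u ⊕_s w = v` (such `w` exists because `y ↦ u ⊕_s y` is a
bijection), unless `w = u`, when a Type 1 or a Type 3 block contains them. There are at most
`m (3m + 1) / 2 = C(3m + 1, 2) / 3` blocks, so by double counting no pair lies in two blocks.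

`π_S` maps level `0`, `∞`, level `2` and level `1` bijectively onto `[0, m)`, `{m}`,
`[m + 1, 2m]` and `[2m + 1, 3m]`. With its exact values, every block sum is at least `3m + 1`,
with equality for the Type 3 block `{∞, (m - 1, 0), (m/2 - 1, 1)}`.
-/

open Finset

theorem isSTS_of_forall_exists_subset {n : ℕ} {B : Finset (Finset ℕ)}
    (hB : ∀ b ∈ B, b ⊆ range n ∧ #b = 3)
    (hcover : ∀ T ⊆ range n, #T = 2 → ∃ b ∈ B, T ⊆ b)
    (hcard : 6 * #B ≤ n * (n - 1)) : IsSTS n B := by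
  refine ⟨hB, fun T hTn hT2 => ?_⟩
  set pairs := (range n).powersetCard 2
  have hpairs_in_block : ∀ b ∈ B, #(pairs.bipartiteBelow (· ⊆ ·) b) = 3 := by
    intro b hb
    have : pairs.bipartiteBelow (· ⊆ ·) b = b.powersetCard 2 := by
      ext S
      simp only [mem_bipartiteBelow, mem_powersetCard, pairs]
      exact ⟨fun h => ⟨h.2, h.1.2⟩, fun h => ⟨⟨h.1.trans (hB b hb).1, h.2⟩, h.1⟩⟩
    rw [this, card_powersetCard, (hB b hb).2]
    rfl
  have hcovered : ∀ S ∈ pairs, 1 ≤ #(B.bipartiteAbove (· ⊆ ·) S) := by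
    intro S hS
    obtain ⟨b, hb, hSb⟩ := hcover S (mem_powersetCard.1 hS).1 (mem_powersetCard.1 hS).2
    exact card_pos.2 ⟨b, (mem_bipartiteAbove _).2 ⟨hb, hSb⟩⟩
  have hdouble : ∑ S ∈ pairs, #(B.bipartiteAbove (· ⊆ ·) S) ≤ ∑ S ∈ pairs, 1 := by
    rw [sum_card_bipartiteAbove_eq_sum_card_bipartiteBelow, sum_congr rfl hpairs_in_block,
      sum_const, sum_const, card_powersetCard, card_range, Nat.choose_two_right, smul_eq_mul,
      smul_eq_mul]
    omega
  have hT : #(B.bipartiteAbove (· ⊆ ·) T) = 1 :=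
    ((sum_eq_sum_iff_of_le hcovered).1 (le_antisymm (sum_le_sum hcovered) hdouble)
      T (mem_powersetCard.2 ⟨hTn, hT2⟩)).symm
  obtain ⟨b, hb⟩ := card_eq_one.1 hT
  have hmem : ∀ c, c ∈ B ∧ T ⊆ c ↔ c = b := fun c => by
    rw [← mem_singleton, ← hb, mem_bipartiteAbove]
  exact ⟨b, (hmem b).2 rfl, fun c hc => (hmem c).1 hc⟩

theorem isSTS_image_of_injOn {α : Type*} [DecidableEq α] {n : ℕ} {P : Finset α}
    {B : Finset (Finset α)} {f : α → ℕ} (hf : Set.InjOn f P) (hfP : P.image f = range n)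
    (hB : ∀ b ∈ B, b ⊆ P ∧ #b = 3)
    (hcover : ∀ p ∈ P, ∀ q ∈ P, p ≠ q → ∃ b ∈ B, p ∈ b ∧ q ∈ b)
    (hcard : 6 * #B ≤ n * (n - 1)) : IsSTS n (B.image (image f)) := by
  refine isSTS_of_forall_exists_subset ?_ ?_ ((Nat.mul_le_mul_left 6 card_image_le).trans hcard)
  · simp only [mem_image, forall_exists_index, and_imp]
    rintro _ b hb rfl
    exact ⟨hfP ▸ image_subset_image (hB b hb).1,
      (card_image_of_injOn (hf.mono (hB b hb).1)).trans (hB b hb).2⟩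
  · intro T hT hT2
    obtain ⟨a, c, hac, rfl⟩ := card_eq_two.1 hT2
    rw [insert_subset_iff, singleton_subset_iff, ← hfP] at hT
    obtain ⟨⟨p, hp, rfl⟩, ⟨q, hq, rfl⟩⟩ := And.imp mem_image.1 mem_image.1 hT
    obtain ⟨b, hb, hpb, hqb⟩ := hcover p hp q hq (ne_of_apply_ne f hac)
    exact ⟨b.image f, mem_image_of_mem _ hb,
      insert_subset (mem_image_of_mem f hpb) (singleton_subset_iff.2 (mem_image_of_mem f hqb))⟩

namespace Skolem

variable {m : ℕ}

theorem skolemOp_comm (x y : ℕ) : skolemOp m x y = skolemOp m y x := by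
  rw [skolemOp, skolemOp, add_comm]

theorem skolemOp_lt (hm : 0 < m) (x y : ℕ) : skolemOp m x y < m := by
  have := Nat.mod_lt (x + y) hm
  unfold skolemOp
  split_ifs <;> omega

theorem two_mul_skolemOp (hm : Even m) (x y : ℕ) :
    2 * skolemOp m x y = (x + y) % m ∨ 2 * skolemOp m x y = (x + y) % m + m - 1 := by
  obtain ⟨k, rfl⟩ := hm
  unfold skolemOp
  split_ifs with h
  · rw [Nat.even_iff] at h
    omega
  · rw [Nat.not_even_iff] at h
    omega

/-- With `m` even, parity decides between the alternatives, so this pins down `x ⊕_s y` in a form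
`omega` can use. -/
theorem skolemOp_cases (hm : Even m) {x y : ℕ} (hx : x < m) (hy : y < m) :
    skolemOp m x y < m ∧
      (x + y < m ∧ (2 * skolemOp m x y = x + y ∨ 2 * skolemOp m x y = x + y + m - 1) ∨
        m ≤ x + y ∧ (2 * skolemOp m x y = x + y - m ∨ 2 * skolemOp m x y = x + y - 1)) := by
  refine ⟨skolemOp_lt (by omega) x y, ?_⟩
  have := two_mul_skolemOp hm x y
  rw [Nat.add_mod_eq_ite, Nat.mod_eq_of_lt hx, Nat.mod_eq_of_lt hy] at this
  split_ifs at this <;> omega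

theorem skolemOp_left_cancel (hm : Even m) {x y₁ y₂ : ℕ} (h₁ : y₁ < m) (h₂ : y₂ < m)
    (h : skolemOp m x y₁ = skolemOp m x y₂) : y₁ = y₂ := by
  have hmod : (x + y₁) % m = (x + y₂) % m := by
    have := two_mul_skolemOp hm x y₁
    have := two_mul_skolemOp hm x y₂
    have := Nat.mod_lt (x + y₁) (by omega : 0 < m)
    have := Nat.mod_lt (x + y₂) (by omega : 0 < m)
    obtain ⟨k, rfl⟩ := hm
    omega
  exact (Nat.ModEq.add_left_cancel' x hmod).eq_of_lt_of_lt h₁ h₂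

theorem exists_skolemOp_eq (hm : Even m) {x z : ℕ} (hx : x < m) (hz : z < m) :
    ∃ y < m, skolemOp m x y = z := by
  obtain ⟨s, hs, hzs⟩ : ∃ s < m, 2 * z = s ∨ 2 * z = s + m - 1 := by
    by_cases h : 2 * z < m
    · exact ⟨2 * z, h, Or.inl rfl⟩
    · exact ⟨2 * z + 1 - m, by omega, Or.inr (by omega)⟩
  refine ⟨(s + (m - x)) % m, Nat.mod_lt _ (by omega), ?_⟩
  have hsum : (x + (s + (m - x)) % m) % m = s := by
    rw [Nat.add_mod_mod, show x + (s + (m - x)) = s + m by omega, Nat.add_mod_right,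
      Nat.mod_eq_of_lt hs]
  have := two_mul_skolemOp hm x ((s + (m - x)) % m)
  have := skolemOp_lt (by omega : 0 < m) x ((s + (m - x)) % m)
  rw [hsum] at *
  obtain ⟨k, rfl⟩ := hm
  omega

theorem skolemOp_self (hm : Even m) {u : ℕ} (hu : u < m) :
    skolemOp m u u = if 2 * u < m then u else u - m / 2 := by
  have := skolemOp_cases hm hu hu
  obtain ⟨k, rfl⟩ := hm
  split_ifs <;> omega

def skolemPoints (m : ℕ) : Finset (Option (ℕ × ℕ)) :=
  insert none ((range m ×ˢ range 3).map Function.Embedding.some)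

@[simp]
theorem none_mem_skolemPoints : none ∈ skolemPoints m := mem_insert_self _ _

@[simp]
theorem some_mem_skolemPoints {x i : ℕ} : some (x, i) ∈ skolemPoints m ↔ x < m ∧ i < 3 := by
  simp [skolemPoints]

theorem card_skolemPoints : #(skolemPoints m) = 3 * m + 1 := by
  rw [skolemPoints, card_insert_of_notMem (by simp), card_map, card_product, card_range,
    card_range, mul_comm]

@[simp]
theorem skolemMap_none : skolemMap m none = m := rfl

@[simp]
theorem skolemMap_level_zero (x : ℕ) : skolemMap m (some (x, 0)) = m - 1 - x := rfl

@[simp]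
theorem skolemMap_level_two (x : ℕ) : skolemMap m (some (x, 2)) = m + 1 + skolemOp m 0 x := rfl

theorem skolemMap_level_one (hm : Even m) {x : ℕ} (hx : x < m) :
    2 * x + 2 = m ∧ skolemMap m (some (x, 1)) = 2 * m + 1 ∨
    x = m - 1 ∧ skolemMap m (some (x, 1)) = 2 * m + 2 ∨
    2 * x + 2 < m ∧ skolemMap m (some (x, 1)) = 2 * m + 3 + 2 * x ∨
    m ≤ 2 * x ∧ x < m - 1 ∧ skolemMap m (some (x, 1)) = m + 4 + 2 * x := by
  obtain ⟨k, rfl⟩ := hm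
  simp only [skolemMap, skolemInv, one_ne_zero, if_false, if_true]
  split_ifs <;> omega

theorem two_mul_skolemOp_zero (hm : Even m) {x : ℕ} (hx : x < m) :
    skolemOp m 0 x < m ∧ (2 * skolemOp m 0 x = x ∨ 2 * skolemOp m 0 x = x + m - 1) := by
  have := skolemOp_cases hm (x := 0) (by omega) hx
  omega

theorem skolemMap_some_mem (hm : Even m) {x i : ℕ} (hx : x < m) (hi : i < 3) :
    i = 0 ∧ skolemMap m (some (x, i)) < m ∨
    i = 1 ∧ 2 * m + 1 ≤ skolemMap m (some (x, i)) ∧ skolemMap m (some (x, i)) ≤ 3 * m ∨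
    i = 2 ∧ m + 1 ≤ skolemMap m (some (x, i)) ∧ skolemMap m (some (x, i)) ≤ 2 * m := by
  obtain rfl | rfl | rfl : i = 0 ∨ i = 1 ∨ i = 2 := by omega
  · rw [skolemMap_level_zero]; omega
  · have := skolemMap_level_one hm hx
    obtain ⟨k, rfl⟩ := hm
    omega
  · have := two_mul_skolemOp_zero hm hx; rw [skolemMap_level_two]; omega

theorem skolemMap_injOn (hm : Even m) : Set.InjOn (skolemMap m) (skolemPoints m) := by
  rintro (_ | ⟨x, i⟩) hp (_ | ⟨y, j⟩) hq h
  · rfl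
  · have := skolemMap_some_mem hm (some_mem_skolemPoints.1 hq).1 (some_mem_skolemPoints.1 hq).2
    simp only [skolemMap_none] at h
    omega
  · have := skolemMap_some_mem hm (some_mem_skolemPoints.1 hp).1 (some_mem_skolemPoints.1 hp).2
    simp only [skolemMap_none] at h
    omega
  obtain ⟨hx, hi⟩ := some_mem_skolemPoints.1 hp
  obtain ⟨hy, hj⟩ := some_mem_skolemPoints.1 hq
  have := skolemMap_some_mem hm hx hi
  have := skolemMap_some_mem hm hy hj
  obtain rfl : i = j := by omega
  suffices x = y by rw [this]
  obtain rfl | rfl | rfl : i = 0 ∨ i = 1 ∨ i = 2 := by omega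
  · simp only [skolemMap_level_zero] at h; omega
  · have := skolemMap_level_one hm hx
    have := skolemMap_level_one hm hy
    obtain ⟨k, rfl⟩ := hm
    omega
  · simp only [skolemMap_level_two, Nat.add_left_cancel_iff] at h
    exact skolemOp_left_cancel hm hx hy h

theorem image_skolemMap_skolemPoints (hm : Even m) :
    (skolemPoints m).image (skolemMap m) = range (3 * m + 1) := by
  refine eq_of_subset_of_card_le ?_ ?_
  · simp only [subset_iff, mem_image, mem_range, forall_exists_index, and_imp]
    rintro _ (_ | ⟨x, i⟩) hp rfl
    · simp only [skolemMap_none]; omega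
    · have := skolemMap_some_mem hm (some_mem_skolemPoints.1 hp).1 (some_mem_skolemPoints.1 hp).2
      omega
  · rw [card_range, card_image_of_injOn (skolemMap_injOn hm), card_skolemPoints]

theorem mem_skolemBlocks {b : Finset (Option (ℕ × ℕ))} :
    b ∈ skolemBlocks m ↔
      (∃ x < m / 2, {some (x, 0), some (x, 1), some (x, 2)} = b) ∨
      (∃ x y i, x < y ∧ y < m ∧ i < 3 ∧
        {some (x, i), some (y, i), some (skolemOp m x y, (i + 1) % 3)} = b) ∨
      (∃ x < m / 2, ∃ i < 3, {none, some (x + m / 2, i), some (x, (i + 1) % 3)} = b) := by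
  simp only [skolemBlocks, mem_union, mem_image, mem_range, mem_product, mem_filter,
    Prod.exists, or_assoc]
  refine or_congr Iff.rfl (or_congr ?_ ?_)
  · constructor
    · rintro ⟨x, y, i, ⟨⟨⟨-, hy⟩, hxy⟩, hi⟩, rfl⟩
      exact ⟨x, y, i, hxy, hy, hi, rfl⟩
    · rintro ⟨x, y, i, hxy, hy, hi, rfl⟩
      exact ⟨x, y, i, ⟨⟨⟨hxy.trans hy, hy⟩, hxy⟩, hi⟩, rfl⟩
  · constructor
    · rintro ⟨x, i, ⟨hx, hi⟩, rfl⟩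
      exact ⟨x, hx, i, hi, rfl⟩
    · rintro ⟨x, hx, i, hi, rfl⟩
      exact ⟨x, i, ⟨hx, hi⟩, rfl⟩

theorem skolemOp_triple_mem_skolemBlocks {x y i : ℕ} (hxy : x ≠ y) (hx : x < m) (hy : y < m)
    (hi : i < 3) :
    {some (x, i), some (y, i), some (skolemOp m x y, (i + 1) % 3)} ∈ skolemBlocks m := by
  rcases hxy.lt_or_gt with hxy | hyx
  · exact mem_skolemBlocks.2 (Or.inr (Or.inl ⟨x, y, i, hxy, hy, hi, rfl⟩))
  · rw [insert_comm, skolemOp_comm]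
    exact mem_skolemBlocks.2 (Or.inr (Or.inl ⟨y, x, i, hyx, hx, hi, rfl⟩))

theorem subset_skolemPoints_and_card_eq_three (hm : Even m) {b : Finset (Option (ℕ × ℕ))}
    (hb : b ∈ skolemBlocks m) : b ⊆ skolemPoints m ∧ #b = 3 := by
  rcases mem_skolemBlocks.1 hb with ⟨x, hx, rfl⟩ | ⟨x, y, i, hxy, hy, hi, rfl⟩ |
    ⟨x, hx, i, hi, rfl⟩
  · refine ⟨?_, card_triple_eq_three_iff.2 ⟨by simp, by simp, by simp⟩⟩
    simp only [insert_subset_iff, singleton_subset_iff, some_mem_skolemPoints]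
    omega
  · have := skolemOp_lt (by omega : 0 < m) x y
    refine ⟨?_, card_triple_eq_three_iff.2 ⟨by simp; omega, by simp; omega, by simp; omega⟩⟩
    simp only [insert_subset_iff, singleton_subset_iff, some_mem_skolemPoints]
    omega
  · obtain ⟨k, rfl⟩ := hm
    refine ⟨?_, card_triple_eq_three_iff.2 ⟨by simp, by simp, by simp; omega⟩⟩
    simp only [insert_subset_iff, singleton_subset_iff, some_mem_skolemPoints,
      none_mem_skolemPoints, true_and]
    omega

theorem two_mul_card_skolemBlocks_le (hm : Even m) :
    2 * #(skolemBlocks m) ≤ m * (3 * m + 1) := by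
  have htype2 : #((range m ×ˢ range m).filter fun p : ℕ × ℕ => p.1 < p.2) * 2 = m * (m - 1) := by
    rw [card_product_filter_lt, card_range, Nat.choose_two_right,
      Nat.div_mul_cancel (Nat.even_mul_pred_self m).two_dvd]
  have hunion : #(skolemBlocks m) ≤
      m / 2 + #((range m ×ˢ range m).filter fun p : ℕ × ℕ => p.1 < p.2) * 3 + m / 2 * 3 := by
    refine (card_union_le _ _).trans (add_le_add ((card_union_le _ _).trans
      (add_le_add card_image_le card_image_le)) card_image_le) |>.trans ?_
    simp only [card_range, card_product, le_refl]
  have hsq : m * (m - 1) + m = m * m := by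
    rcases m with _ | m
    · rfl
    · rw [Nat.add_sub_cancel, Nat.mul_succ]
  have hmul : m * (3 * m + 1) = 3 * (m * m) + m := by ring
  obtain ⟨k, rfl⟩ := hm
  omega

theorem exists_skolemBlock_mem_none (hm : Even m) {u i : ℕ} (hu : u < m) (hi : i < 3) :
    ∃ b ∈ skolemBlocks m, none ∈ b ∧ some (u, i) ∈ b := by
  by_cases h : u < m / 2
  · refine ⟨{none, some (u + m / 2, (i + 2) % 3), some (u, ((i + 2) % 3 + 1) % 3)},
      mem_skolemBlocks.2 (Or.inr (Or.inr ⟨u, h, (i + 2) % 3, by omega, rfl⟩)), by simp, ?_⟩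
    rw [show ((i + 2) % 3 + 1) % 3 = i by omega]
    simp
  · obtain ⟨x, rfl⟩ : ∃ x, u = x + m / 2 := ⟨u - m / 2, by omega⟩
    obtain ⟨k, rfl⟩ := hm
    exact ⟨_, mem_skolemBlocks.2 (Or.inr (Or.inr ⟨x, by omega, i, hi, rfl⟩)), by simp, by simp⟩

theorem exists_skolemBlock_mem_succ_level (hm : Even m) {u v i : ℕ} (hu : u < m) (hv : v < m)
    (hi : i < 3) : ∃ b ∈ skolemBlocks m, some (u, i) ∈ b ∧ some (v, (i + 1) % 3) ∈ b := by
  obtain ⟨w, hw, rfl⟩ := exists_skolemOp_eq hm hu hv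
  rcases eq_or_ne w u with rfl | hwu
  · rw [skolemOp_self hm hu]
    split_ifs with h
    · refine ⟨_, mem_skolemBlocks.2 (Or.inl ⟨w, by rcases hm with ⟨k, rfl⟩; omega, rfl⟩), ?_⟩
      obtain rfl | rfl | rfl : i = 0 ∨ i = 1 ∨ i = 2 := by omega
      all_goals simp
    · obtain ⟨x, rfl⟩ : ∃ x, w = x + m / 2 := ⟨w - m / 2, by omega⟩
      obtain ⟨k, rfl⟩ := hm
      refine ⟨_, mem_skolemBlocks.2 (Or.inr (Or.inr ⟨x, by omega, i, hi, rfl⟩)), by simp, ?_⟩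
      simp
  · exact ⟨_, skolemOp_triple_mem_skolemBlocks hwu.symm hu hw hi, by simp, by simp⟩

theorem exists_skolemBlock_mem_of_ne (hm : Even m) {p q : Option (ℕ × ℕ)}
    (hp : p ∈ skolemPoints m) (hq : q ∈ skolemPoints m) (hpq : p ≠ q) :
    ∃ b ∈ skolemBlocks m, p ∈ b ∧ q ∈ b := by
  have swap {p q : Option (ℕ × ℕ)} (h : ∃ b ∈ skolemBlocks m, p ∈ b ∧ q ∈ b) :
      ∃ b ∈ skolemBlocks m, q ∈ b ∧ p ∈ b :=
    h.imp fun _ ⟨hb, hp, hq⟩ => ⟨hb, hq, hp⟩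
  rcases p with _ | ⟨u, i⟩ <;> rcases q with _ | ⟨v, j⟩
  · exact absurd rfl hpq
  · exact exists_skolemBlock_mem_none hm (some_mem_skolemPoints.1 hq).1
      (some_mem_skolemPoints.1 hq).2
  · exact swap (exists_skolemBlock_mem_none hm (some_mem_skolemPoints.1 hp).1
      (some_mem_skolemPoints.1 hp).2)
  obtain ⟨hu, hi⟩ := some_mem_skolemPoints.1 hp
  obtain ⟨hv, hj⟩ := some_mem_skolemPoints.1 hq
  rcases eq_or_ne i j with rfl | hij
  · have huv : u ≠ v := fun h => hpq (h ▸ rfl)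
    exact ⟨_, skolemOp_triple_mem_skolemBlocks huv hu hv hi, by simp, by simp⟩
  · obtain rfl | rfl : j = (i + 1) % 3 ∨ i = (j + 1) % 3 := by omega
    · exact exists_skolemBlock_mem_succ_level hm hu hv hi
    · exact swap (exists_skolemBlock_mem_succ_level hm hv hu hj)

theorem sum_skolemMap_of_triple_mem_skolemBlocks (hm : Even m) {p q r : Option (ℕ × ℕ)}
    (hb : {p, q, r} ∈ skolemBlocks m) :
    ∑ x ∈ {p, q, r}, skolemMap m x = skolemMap m p + skolemMap m q + skolemMap m r := by
  obtain ⟨hpq, hpr, hqr⟩ :=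
    card_triple_eq_three_iff.1 (subset_skolemPoints_and_card_eq_three hm hb).2
  rw [sum_insert (by simp [hpq, hpr]), sum_pair hqr, add_assoc]

theorem le_skolemMap_add_skolemOp_triple (hm : Even m) {x y i : ℕ} (hxy : x < y) (hy : y < m)
    (hi : i < 3) :
    3 * m + 1 ≤ skolemMap m (some (x, i)) + skolemMap m (some (y, i)) +
      skolemMap m (some (skolemOp m x y, (i + 1) % 3)) := by
  have hz := skolemOp_cases hm (hxy.trans hy) hy
  obtain rfl | rfl | rfl : i = 0 ∨ i = 1 ∨ i = 2 := by omega
  · have := skolemMap_level_one hm hz.1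
    simp only [skolemMap_level_zero, Nat.reduceAdd, Nat.reduceMod]
    obtain ⟨k, rfl⟩ := hm
    omega
  · have := skolemMap_some_mem hm (x := x) (i := 1) (by omega) (by omega)
    have := skolemMap_some_mem hm (x := y) (i := 1) (by omega) (by omega)
    have := skolemMap_some_mem hm (x := skolemOp m x y) (i := 2) hz.1 (by omega)
    simp only [Nat.reduceAdd, Nat.reduceMod]
    omega
  · have := two_mul_skolemOp_zero hm (hxy.trans hy)
    have := two_mul_skolemOp_zero hm hy
    simp only [skolemMap_level_zero, skolemMap_level_two, Nat.reduceAdd, Nat.reduceMod]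
    obtain ⟨k, rfl⟩ := hm
    omega

theorem le_skolemMap_add_none_triple (hm : Even m) {x i : ℕ} (hx : x < m / 2) (hi : i < 3) :
    3 * m + 1 ≤ skolemMap m none + skolemMap m (some (x + m / 2, i)) +
      skolemMap m (some (x, (i + 1) % 3)) := by
  obtain rfl | rfl | rfl : i = 0 ∨ i = 1 ∨ i = 2 := by omega
  · have := skolemMap_level_one hm (x := x) (by omega)
    simp only [skolemMap_none, skolemMap_level_zero, Nat.reduceAdd, Nat.reduceMod]
    obtain ⟨k, rfl⟩ := hm
    omega
  · have := skolemMap_some_mem hm (x := x + m / 2) (i := 1) (by omega) (by omega)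
    have := skolemMap_some_mem hm (x := x) (i := 2) (by omega) (by omega)
    simp only [skolemMap_none, Nat.reduceAdd, Nat.reduceMod]
    omega
  · have := two_mul_skolemOp_zero hm (x := x + m / 2) (by omega)
    simp only [skolemMap_none, skolemMap_level_zero, skolemMap_level_two, Nat.reduceAdd,
      Nat.reduceMod]
    obtain ⟨k, rfl⟩ := hm
    omega

theorem le_sum_skolemMap (hm : Even m) {b : Finset (Option (ℕ × ℕ))} (hb : b ∈ skolemBlocks m) :
    3 * m + 1 ≤ ∑ p ∈ b, skolemMap m p := by
  rcases mem_skolemBlocks.1 hb with ⟨x, hx, rfl⟩ | ⟨x, y, i, hxy, hy, hi, rfl⟩ |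
    ⟨x, hx, i, hi, rfl⟩ <;>
    rw [sum_skolemMap_of_triple_mem_skolemBlocks hm hb]
  · have := skolemMap_some_mem hm (x := x) (i := 1) (by omega) (by omega)
    have := skolemMap_some_mem hm (x := x) (i := 2) (by omega) (by omega)
    omega
  · exact le_skolemMap_add_skolemOp_triple hm hxy hy hi
  · exact le_skolemMap_add_none_triple hm hx hi

theorem exists_sum_skolemMap_eq (hm : Even m) (hm0 : 0 < m) :
    ∃ b ∈ skolemBlocks m, ∑ p ∈ b, skolemMap m p = 3 * m + 1 := by
  have hx : m / 2 - 1 < m / 2 := by rcases hm with ⟨k, rfl⟩; omega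
  have hb := (mem_skolemBlocks (m := m)).2 (Or.inr (Or.inr ⟨m / 2 - 1, hx, 0, by omega, rfl⟩))
  refine ⟨_, hb, ?_⟩
  have := skolemMap_level_one hm (x := m / 2 - 1) (by omega)
  rw [sum_skolemMap_of_triple_mem_skolemBlocks hm hb]
  simp only [skolemMap_none, skolemMap_level_zero, Nat.reduceAdd, Nat.reduceMod]
  obtain ⟨k, rfl⟩ := hm
  omega

end Skolem

open Skolem

/-- For every `n ≥ 7` with `n ≡ 1 (mod 6)`, the image under the Skolem Mapping
of the block set of the Skolem Construction is a Steiner triple system on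
`{0,…,n-1}` whose min-sum equals `n`. -/
theorem skolem_sts_minSum_eq (n : ℕ) (hn : 7 ≤ n) (hmod : n % 6 = 1) :
    IsSTS n ((skolemBlocks ((n - 1) / 3)).image fun b => b.image (skolemMap ((n - 1) / 3))) ∧
    (∀ b ∈ (skolemBlocks ((n - 1) / 3)).image fun b => b.image (skolemMap ((n - 1) / 3)),
      n ≤ ∑ x ∈ b, x) ∧
    (∃ b ∈ (skolemBlocks ((n - 1) / 3)).image fun b => b.image (skolemMap ((n - 1) / 3)),
      ∑ x ∈ b, x = n) := by
  obtain ⟨m, rfl, hm⟩ : ∃ m, n = 3 * m + 1 ∧ Even m :=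
    ⟨(n - 1) / 3, by omega, Nat.even_iff.2 (by omega)⟩
  rw [show (3 * m + 1 - 1) / 3 = m by omega]
  have hinj : ∀ b ∈ skolemBlocks m, Set.InjOn (skolemMap m) b := fun b hb =>
    (skolemMap_injOn hm).mono (subset_skolemPoints_and_card_eq_three hm hb).1
  refine ⟨isSTS_image_of_injOn (skolemMap_injOn hm) (image_skolemMap_skolemPoints hm)
    (fun b hb => subset_skolemPoints_and_card_eq_three hm hb)
    (fun p hp q hq => exists_skolemBlock_mem_of_ne hm hp hq) ?_, ?_, ?_⟩
  · have := two_mul_card_skolemBlocks_le hm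
    rw [Nat.add_sub_cancel]
    nlinarith
  · simp only [forall_mem_image]
    intro b hb
    rw [sum_image (hinj b hb)]
    exact le_sum_skolemMap hm hb
  · obtain ⟨b, hb, hsum⟩ := exists_sum_skolemMap_eq hm (by omega)
    exact ⟨_, mem_image_of_mem _ hb, by rw [sum_image (hinj b hb), hsum]⟩
end

section
/- Let n = 3m ≥ 27 with m odd, and consider the Bose Construction with the Bose YXI-labeling, i.e., the block labeling given by ℓ(B_x) = m-1-x for each Type 1 block B_x, and ℓ(B_{x,y,i}) = m + i + 3x + 3y(y-1)/2 for each Type 2 block B_{x,y,i}. Then the minimum over all points (z,i) of the sum of labels of blocks containing (z,i) equals (55/1728)n³ + (1/192)n² - (9/64)n - 31/64 when m ≡ 1 (mod 4) (and n ≥ 27), and equals (55/1728)n³ + (1/192)n² - (13/64)n + 13/64 when m ≡ 3 (mod 4) (and n ≥ 33). -/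
/-- The dual sum of the point `(z,i)`: the sum of the labels `ℓ(B)` over all
blocks `B` of the Bose Construction containing `(z,i)`. -/
def boseDualSum (m : ℕ) (ℓ : Finset (ℕ × ℕ) → ℕ) (z i : ℕ) : ℕ :=
  ∑ b ∈ (boseBlocks m).filter fun b => (z, i) ∈ b, ℓ b

open Finset

/-!
The point `(z, i)` lies in its type-1 block, in the type-2 blocks `B_{z,y,i}` (`y > z`) and
`B_{x,z,i}` (`x < z`), and in the blocks `B_{x,y,i-1}` with `x ⊕_b y = z`, i.e. with
`x + y ∈ {2z, 2z + m, 2z - m}`; along each of these lines `y` is determined by `x`, and `x` runs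
through an interval. Summing the labels, which are quadratic in `x` and `y`, gives the dual sum in
closed form: a cubic in `z` (one for `2z < m`, another for `2z > m`) plus `(m - 1)` times a weight
that is `1` for `i = 0, 1`. For `m = 4k + r` the first cubic minus the claimed minimum factors as
`(z - k) q(z)` with `q ≤ 0` at integers below `k` and `q ≥ 0` at integers above, and the second
cubic stays above the minimum, so the minimum is attained at `(k, 0)`.
-/

namespace Bose

theorem modEq_iff_of_lt_two_mul {a b m : ℕ} (ha : a < 2 * m) (hb : b < 2 * m) :
    a ≡ b [MOD m] ↔ a = b ∨ a = b + m ∨ b = a + m := by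
  have reduce : ∀ c < 2 * m, c % m = if c < m then c else c - m := fun c hc => by
    split_ifs with h
    · exact Nat.mod_eq_of_lt h
    · rw [Nat.mod_eq_sub_mod (by omega), Nat.mod_eq_of_lt (by omega)]
  unfold Nat.ModEq
  rw [reduce a ha, reduce b hb]
  split_ifs <;> omega

-- `t + 1 = (m + 1) / 2` is the inverse of `2` modulo `m = 2t + 1`.
theorem boseOp_eq_iff_modEq (t x y z : ℕ) (hz : z < 2 * t + 1) :
    boseOp (2 * t + 1) x y = z ↔ x + y ≡ 2 * z [MOD 2 * t + 1] := by
  have hcop : Nat.Coprime (2 * t + 1) 2 := Nat.coprime_two_right.2 (odd_two_mul_add_one t)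
  have hinv : 2 * ((t + 1) * (x + y)) ≡ x + y [MOD 2 * t + 1] := by
    rw [show 2 * ((t + 1) * (x + y)) = (2 * t + 1) * (x + y) + (x + y) by ring]
    exact Nat.mul_add_mod _ _ _
  have hmul : (t + 1) * (x + y) ≡ z [MOD 2 * t + 1] ↔ x + y ≡ 2 * z [MOD 2 * t + 1] :=
    ⟨fun h => hinv.symm.trans (h.mul_left 2),
      fun h => Nat.ModEq.cancel_left_of_coprime hcop (hinv.trans h)⟩
  rw [boseOp, show (2 * t + 1 + 1) / 2 = t + 1 by omega, ← hmul, Nat.ModEq,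
    Nat.mod_eq_of_lt hz]

theorem boseOp_eq_iff (t x y z : ℕ) (hx : x < 2 * t + 1) (hy : y < 2 * t + 1)
    (hz : z < 2 * t + 1) :
    boseOp (2 * t + 1) x y = z ↔
      x + y = 2 * z ∨ x + y = 2 * z + (2 * t + 1) ∨ 2 * z = x + y + (2 * t + 1) := by
  rw [boseOp_eq_iff_modEq t x y z hz, modEq_iff_of_lt_two_mul (by omega) (by omega)]

def typeOneBlock (x : ℕ) : Finset (ℕ × ℕ) := {(x, 0), (x, 1), (x, 2)}

def typeTwoBlock (m : ℕ) (q : (ℕ × ℕ) × ℕ) : Finset (ℕ × ℕ) :=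
  {(q.1.1, q.2), (q.1.2, q.2), (boseOp m q.1.1 q.1.2, (q.2 + 1) % 3)}

def typeTwoIndex (m : ℕ) : Finset ((ℕ × ℕ) × ℕ) :=
  ((range m ×ˢ range m).filter fun p => p.1 < p.2) ×ˢ range 3

theorem mem_typeTwoIndex {m : ℕ} {q : (ℕ × ℕ) × ℕ} :
    q ∈ typeTwoIndex m ↔ q.1.1 < q.1.2 ∧ q.1.2 < m ∧ q.2 < 3 := by
  simp only [typeTwoIndex, mem_product, mem_filter, mem_range]
  omega

theorem boseBlocks_eq (m : ℕ) :
    boseBlocks m = (range m).image typeOneBlock ∪ (typeTwoIndex m).image (typeTwoBlock m) :=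
  rfl

theorem typeOneBlock_injective : Function.Injective typeOneBlock := by
  intro x y h
  have : (x, 0) ∈ typeOneBlock y := h ▸ by simp [typeOneBlock]
  simpa [typeOneBlock] using this

theorem typeTwoBlock_injOn (m : ℕ) : Set.InjOn (typeTwoBlock m) (typeTwoIndex m) := by
  rintro ⟨⟨x, y⟩, j⟩ hq ⟨⟨x', y'⟩, j'⟩ hq' h
  rw [mem_coe, mem_typeTwoIndex] at hq hq'
  have h1 : (x, j) ∈ typeTwoBlock m ((x', y'), j') := h ▸ by simp [typeTwoBlock]
  have h2 : (y, j) ∈ typeTwoBlock m ((x', y'), j') := h ▸ by simp [typeTwoBlock]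
  have h3 : (x', j') ∈ typeTwoBlock m ((x, y), j) := h ▸ by simp [typeTwoBlock]
  have h4 : (y', j') ∈ typeTwoBlock m ((x, y), j) := h ▸ by simp [typeTwoBlock]
  simp only [typeTwoBlock, mem_insert, mem_singleton, Prod.mk.injEq] at h1 h2 h3 h4 hq hq'
  simp only [Prod.mk.injEq]
  omega

theorem typeOneBlock_ne_typeTwoBlock {m x : ℕ} {q : (ℕ × ℕ) × ℕ}
    (hq : q ∈ typeTwoIndex m) :
    typeOneBlock x ≠ typeTwoBlock m q := by
  intro h
  rw [mem_typeTwoIndex] at hq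
  have h0 : (x, 0) ∈ typeTwoBlock m q := h ▸ by simp [typeOneBlock]
  have h1 : (x, 1) ∈ typeTwoBlock m q := h ▸ by simp [typeOneBlock]
  have h2 : (x, 2) ∈ typeTwoBlock m q := h ▸ by simp [typeOneBlock]
  simp only [typeTwoBlock, mem_insert, mem_singleton, Prod.mk.injEq] at h0 h1 h2
  omega

theorem boseDualSum_eq_add_sum_typeTwo (m : ℕ) (ℓ : Finset (ℕ × ℕ) → ℕ) {z i : ℕ}
    (hz : z < m) (hi : i < 3) :
    boseDualSum m ℓ z i = ℓ (typeOneBlock z) +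
      ∑ q ∈ (typeTwoIndex m).filter (fun q => (z, i) ∈ typeTwoBlock m q),
        ℓ (typeTwoBlock m q) := by
  have hdisj :
      Disjoint ((range m).image typeOneBlock) ((typeTwoIndex m).image (typeTwoBlock m)) := by
    simp only [disjoint_left, mem_image, not_exists, not_and]
    rintro _ ⟨x, -, rfl⟩ q hq
    exact (typeOneBlock_ne_typeTwoBlock hq).symm
  have hone : (range m).filter (fun x => (z, i) ∈ typeOneBlock x) = {z} := by
    ext x
    simp only [mem_filter, mem_range, typeOneBlock, mem_insert, mem_singleton, Prod.mk.injEq]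
    omega
  rw [boseDualSum, boseBlocks_eq, filter_union, sum_union (disjoint_filter_filter hdisj),
    filter_image, filter_image, sum_image typeOneBlock_injective.injOn,
    sum_image ((typeTwoBlock_injOn m).mono (filter_subset _ _)), hone, sum_singleton]

def partnerIndex (m z j : ℕ) : Finset ((ℕ × ℕ) × ℕ) :=
  (typeTwoIndex m).filter fun q => boseOp m q.1.1 q.1.2 = z ∧ q.2 = j

theorem boseDualSum_eq (m : ℕ) (ℓ : Finset (ℕ × ℕ) → ℕ) {z i : ℕ} (hz : z < m)
    (hi : i < 3) :
    boseDualSum m ℓ z i = ℓ (typeOneBlock z) +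
      ∑ y ∈ Ico (z + 1) m, ℓ (typeTwoBlock m ((z, y), i)) +
      ∑ x ∈ range z, ℓ (typeTwoBlock m ((x, z), i)) +
      ∑ q ∈ partnerIndex m z ((i + 2) % 3), ℓ (typeTwoBlock m q) := by
  have hsplit : (typeTwoIndex m).filter (fun q => (z, i) ∈ typeTwoBlock m q) =
      ((Ico (z + 1) m).image fun y => ((z, y), i)) ∪ ((range z).image fun x => ((x, z), i)) ∪
        partnerIndex m z ((i + 2) % 3) := by
    ext ⟨⟨x, y⟩, j⟩
    simp only [partnerIndex, typeTwoBlock, mem_union, mem_filter, mem_typeTwoIndex, mem_image,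
      mem_Ico, mem_range, mem_insert, mem_singleton, Prod.mk.injEq]
    constructor
    · rintro ⟨⟨hxy, hym, hj⟩, ⟨rfl, rfl⟩ | ⟨rfl, rfl⟩ | ⟨rfl, rfl⟩⟩
      · exact Or.inl (Or.inl ⟨y, ⟨by omega, hym⟩, ⟨rfl, rfl⟩, rfl⟩)
      · exact Or.inl (Or.inr ⟨x, hxy, ⟨rfl, rfl⟩, rfl⟩)
      · exact Or.inr ⟨⟨hxy, hym, hj⟩, rfl, by omega⟩
    · rintro ((⟨y, ⟨hy, hym⟩, ⟨rfl, rfl⟩, rfl⟩ | ⟨x, hx, ⟨rfl, rfl⟩, rfl⟩) |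
        ⟨hq, rfl, rfl⟩)
      · exact ⟨⟨by omega, hym, hi⟩, Or.inl ⟨rfl, rfl⟩⟩
      · exact ⟨⟨hx, hz, hi⟩, Or.inr (Or.inl ⟨rfl, rfl⟩)⟩
      · exact ⟨hq, Or.inr (Or.inr ⟨rfl, by omega⟩)⟩
  have hrow : Disjoint ((Ico (z + 1) m).image fun y => ((z, y), i))
      ((range z).image fun x => ((x, z), i)) := by
    simp only [disjoint_left, mem_image, mem_Ico, mem_range, not_exists, not_and]
    rintro _ ⟨y, hy, rfl⟩ x hx h
    simp only [Prod.mk.injEq] at h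
    omega
  have hpartner : Disjoint (((Ico (z + 1) m).image fun y => ((z, y), i)) ∪
      ((range z).image fun x => ((x, z), i))) (partnerIndex m z ((i + 2) % 3)) := by
    simp only [disjoint_left, mem_union, mem_image, partnerIndex, mem_filter, not_and]
    rintro _ (⟨y, -, rfl⟩ | ⟨x, -, rfl⟩) - - hj <;> omega
  rw [boseDualSum_eq_add_sum_typeTwo m ℓ hz hi, hsplit, sum_union hpartner, sum_union hrow,
    sum_image (by simp), sum_image (by simp)]
  ring

def IsYXILabeling (m : ℕ) (ℓ : Finset (ℕ × ℕ) → ℕ) : Prop :=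
  (∀ x < m, ℓ (typeOneBlock x) = m - 1 - x) ∧
    ∀ x y i : ℕ, x < y → y < m → i < 3 →
      ℓ (typeTwoBlock m ((x, y), i)) = m + i + 3 * x + 3 * (y * (y - 1)) / 2

def yxiLabel (m x y i : ℚ) : ℚ := m + i + 3 * x + 3 * y * (y - 1) / 2

variable {m : ℕ} {ℓ : Finset (ℕ × ℕ) → ℕ}

theorem IsYXILabeling.cast_typeTwoBlock (hℓ : IsYXILabeling m ℓ)
    {x y i : ℕ} (hxy : x < y) (hy : y < m) (hi : i < 3) :
    (ℓ (typeTwoBlock m ((x, y), i)) : ℚ) = yxiLabel m x y i := by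
  have heven : 2 ∣ 3 * (y * (y - 1)) := dvd_mul_of_dvd_right (Nat.even_mul_pred_self y).two_dvd 3
  rw [hℓ.2 x y i hxy hy hi, yxiLabel, Nat.cast_add, Nat.cast_div heven two_ne_zero]
  push_cast [Nat.cast_sub (show 1 ≤ y by omega)]
  ring

theorem IsYXILabeling.cast_boseDualSum (hℓ : IsYXILabeling m ℓ)
    {z i : ℕ} (hz : z < m) (hi : i < 3) :
    (boseDualSum m ℓ z i : ℚ) = m - 1 - z +
      ∑ y ∈ Ico (z + 1) m, yxiLabel m z y i + ∑ x ∈ range z, yxiLabel m x z i +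
      ∑ q ∈ partnerIndex m z ((i + 2) % 3), yxiLabel m q.1.1 q.1.2 q.2 := by
  have hpartner : ∀ q ∈ partnerIndex m z ((i + 2) % 3),
      (ℓ (typeTwoBlock m q) : ℚ) = yxiLabel m q.1.1 q.1.2 q.2 := fun q hq => by
    obtain ⟨hxy, hym, hj⟩ := mem_typeTwoIndex.1 (mem_filter.1 hq).1
    exact hℓ.cast_typeTwoBlock hxy hym hj
  rw [boseDualSum_eq m ℓ hz hi, hℓ.1 z hz]
  push_cast [Nat.sub_sub, Nat.cast_sub (show 1 + z ≤ m by omega)]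
  rw [sum_congr rfl fun y hy => hℓ.cast_typeTwoBlock (mem_Ico.1 hy).1 (mem_Ico.1 hy).2 hi,
    sum_congr rfl fun x hx => hℓ.cast_typeTwoBlock (mem_range.1 hx) hz hi,
    sum_congr rfl hpartner]
  ring

theorem sum_yxiLabel_row (m z i : ℕ) (hz : z < m) :
    ∑ y ∈ Ico (z + 1) m, yxiLabel m z y i =
      (m - 1 - z) * (m + i + 3 * z) + (m * (m - 1) * (m - 2) - (z + 1) * z * (z - 1)) / 2 := by
  let F : ℕ → ℚ := fun y => (m + i + 3 * z) * y + y * (y - 1) * (y - 2) / 2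
  rw [sum_congr rfl fun (y : ℕ) _ => show yxiLabel m z y i = F (y + 1) - F y by
    simp only [F, yxiLabel]; push_cast; ring, sum_Ico_sub F (by omega)]
  simp only [F]
  push_cast
  ring

theorem sum_yxiLabel_column (m z i : ℕ) :
    ∑ x ∈ range z, yxiLabel m x z i = z * (m + i) + 3 * (z + 1) * z * (z - 1) / 2 := by
  let F : ℕ → ℚ := fun x => (m + i + 3 * z * (z - 1) / 2) * x + 3 * x * (x - 1) / 2
  rw [sum_congr rfl fun (x : ℕ) _ => show yxiLabel m x z i = F (x + 1) - F x by
    simp only [F, yxiLabel]; push_cast; ring, sum_range_sub F]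
  simp only [F]
  push_cast
  ring

theorem sum_yxiLabel_antidiagonal (m j s u v : ℕ) (huv : u ≤ v) (hvs : v ≤ s + 1) :
    ∑ x ∈ Ico u v, yxiLabel m x (s - x : ℕ) j =
      (v - u) * (m + j) + 3 * (v * (v - 1) - u * (u - 1)) / 2 +
        ((s - u + 1) * (s - u) * (s - u - 1) - (s - v + 1) * (s - v) * (s - v - 1)) / 2 := by
  let F : ℕ → ℚ := fun x =>
    (m + j) * x + 3 * x * (x - 1) / 2 - (s - x + 1) * (s - x) * (s - x - 1) / 2
  rw [sum_congr rfl fun (x : ℕ) hx => show yxiLabel m x (s - x : ℕ) j = F (x + 1) - F x by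
    rw [Nat.cast_sub (by have := (mem_Ico.1 hx).2; omega)]
    simp only [F, yxiLabel]; push_cast; ring, sum_Ico_sub F huv]
  simp only [F]
  ring

def antidiagonalIndex (s u v j : ℕ) : Finset ((ℕ × ℕ) × ℕ) :=
  (Ico u v).image fun x => ((x, s - x), j)

theorem sum_antidiagonalIndex {M : Type*} [AddCommMonoid M] (f : (ℕ × ℕ) × ℕ → M)
    (s u v j : ℕ) :
    ∑ q ∈ antidiagonalIndex s u v j, f q = ∑ x ∈ Ico u v, f ((x, s - x), j) :=
  sum_image fun _ _ _ _ h => congrArg (fun q => q.1.1) h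

theorem disjoint_antidiagonalIndex {s s' u u' v v' j : ℕ} (hs : s ≠ s') (hv : v ≤ s + 1)
    (hv' : v' ≤ s' + 1) :
    Disjoint (antidiagonalIndex s u v j) (antidiagonalIndex s' u' v' j) := by
  simp only [antidiagonalIndex, disjoint_left, mem_image, mem_Ico, not_exists, not_and]
  rintro _ ⟨x, hx, rfl⟩ x' hx' h
  simp only [Prod.mk.injEq] at h
  omega

theorem mem_partnerIndex {t z j : ℕ} (hz : z < 2 * t + 1) {q : (ℕ × ℕ) × ℕ} (hj : j < 3) :
    q ∈ partnerIndex (2 * t + 1) z j ↔ q.1.1 < q.1.2 ∧ q.1.2 < 2 * t + 1 ∧ q.2 = j ∧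
      (q.1.1 + q.1.2 = 2 * z ∨ q.1.1 + q.1.2 = 2 * z + (2 * t + 1) ∨
        2 * z = q.1.1 + q.1.2 + (2 * t + 1)) := by
  rw [partnerIndex, mem_filter, mem_typeTwoIndex]
  constructor
  · rintro ⟨⟨hxy, hy, -⟩, hop, hq⟩
    exact ⟨hxy, hy, hq, (boseOp_eq_iff t _ _ z (by omega) hy hz).1 hop⟩
  · rintro ⟨hxy, hy, hq, hsum⟩
    exact ⟨⟨hxy, hy, hq ▸ hj⟩, (boseOp_eq_iff t _ _ z (by omega) hy hz).2 hsum, hq⟩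

theorem partnerIndex_of_two_mul_lt {t z j : ℕ} (hz : 2 * z < 2 * t + 1) (hj : j < 3) :
    partnerIndex (2 * t + 1) z j =
      antidiagonalIndex (2 * z) 0 z j ∪
        antidiagonalIndex (2 * z + (2 * t + 1)) (2 * z + 1) (z + t + 1) j := by
  ext ⟨⟨x, y⟩, k⟩
  simp only [mem_partnerIndex (by omega : z < 2 * t + 1) hj, antidiagonalIndex, mem_union,
    mem_image, mem_Ico, Prod.mk.injEq]
  constructor
  · rintro ⟨hxy, hy, rfl, hsum | hsum | hsum⟩
    · exact Or.inl ⟨x, by omega, ⟨rfl, by omega⟩, rfl⟩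
    · exact Or.inr ⟨x, by omega, ⟨rfl, by omega⟩, rfl⟩
    · omega
  · rintro (⟨x, hx, ⟨rfl, rfl⟩, rfl⟩ | ⟨x, hx, ⟨rfl, rfl⟩, rfl⟩) <;> omega

theorem partnerIndex_of_le_two_mul {t z j : ℕ} (hz : 2 * t + 1 ≤ 2 * z) (hzm : z < 2 * t + 1)
    (hj : j < 3) :
    partnerIndex (2 * t + 1) z j =
      antidiagonalIndex (2 * z - (2 * t + 1)) 0 (z - t) j ∪
        antidiagonalIndex (2 * z) (2 * z - 2 * t) z j := by
  ext ⟨⟨x, y⟩, k⟩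
  simp only [mem_partnerIndex hzm hj, antidiagonalIndex, mem_union, mem_image, mem_Ico,
    Prod.mk.injEq]
  constructor
  · rintro ⟨hxy, hy, rfl, hsum | hsum | hsum⟩
    · exact Or.inr ⟨x, by omega, ⟨rfl, by omega⟩, rfl⟩
    · omega
    · exact Or.inl ⟨x, by omega, ⟨rfl, by omega⟩, rfl⟩
  · rintro (⟨x, hx, ⟨rfl, rfl⟩, rfl⟩ | ⟨x, hx, ⟨rfl, rfl⟩, rfl⟩) <;> omega

def lowerDualPoly (m z : ℚ) : ℚ :=
  (64 * z ^ 3 - (12 * m + 84) * z ^ 2 + (-6 * m ^ 2 + 84 * m - 158) * z +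
    15 * m ^ 3 - 15 * m ^ 2 + 25 * m - 25) / 16

def upperDualPoly (m z : ℚ) : ℚ :=
  (64 * z ^ 3 - (84 * m + 84) * z ^ 2 + (42 * m ^ 2 + 108 * m - 158) * z +
    9 * m ^ 3 - 39 * m ^ 2 + 55 * m - 25) / 16

-- A point lies in `m - 1` type-2 blocks of its own colour `i` and in `(m - 1) / 2` blocks of
-- colour `(i + 2) % 3`; the labels contribute the colour linearly.
def pointWeight (i : ℕ) : ℚ := i + ((i + 2) % 3 : ℕ) / 2

theorem IsYXILabeling.cast_boseDualSum_of_two_mul_lt (hm : Odd m) (hℓ : IsYXILabeling m ℓ)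
    {z i : ℕ} (hz : 2 * z < m) (hi : i < 3) :
    (boseDualSum m ℓ z i : ℚ) = lowerDualPoly m z + (m - 1) * pointWeight i := by
  obtain ⟨t, rfl⟩ := hm
  rw [hℓ.cast_boseDualSum (by omega) hi, partnerIndex_of_two_mul_lt hz (by omega),
    sum_union (disjoint_antidiagonalIndex (by omega) (by omega) (by omega))]
  simp only [sum_antidiagonalIndex]
  rw [sum_yxiLabel_row _ _ _ (by omega), sum_yxiLabel_column,
    sum_yxiLabel_antidiagonal _ _ _ _ _ (by omega) (by omega),
    sum_yxiLabel_antidiagonal _ _ _ _ _ (by omega) (by omega), lowerDualPoly, pointWeight]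
  push_cast
  ring

theorem IsYXILabeling.cast_boseDualSum_of_le_two_mul (hm : Odd m) (hℓ : IsYXILabeling m ℓ)
    {z i : ℕ} (hz : m ≤ 2 * z) (hzm : z < m) (hi : i < 3) :
    (boseDualSum m ℓ z i : ℚ) = upperDualPoly m z + (m - 1) * pointWeight i := by
  obtain ⟨t, rfl⟩ := hm
  rw [hℓ.cast_boseDualSum hzm hi, partnerIndex_of_le_two_mul hz hzm (by omega),
    sum_union (disjoint_antidiagonalIndex (by omega) (by omega) (by omega))]
  simp only [sum_antidiagonalIndex]
  rw [sum_yxiLabel_row _ _ _ hzm, sum_yxiLabel_column,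
    sum_yxiLabel_antidiagonal _ _ _ _ _ (by omega) (by omega),
    sum_yxiLabel_antidiagonal _ _ _ _ _ (by omega) (by omega), upperDualPoly, pointWeight]
  push_cast [Nat.cast_sub (show 2 * t + 1 ≤ 2 * z by omega), Nat.cast_sub (show t ≤ z by omega),
    Nat.cast_sub (show 2 * t ≤ 2 * z by omega)]
  ring

theorem one_le_pointWeight {i : ℕ} (hi : i < 3) : 1 ≤ pointWeight i := by
  interval_cases i <;> norm_num [pointWeight]

def minSum₁ (n : ℚ) : ℚ := 55 / 1728 * n ^ 3 + 1 / 192 * n ^ 2 - 9 / 64 * n - 31 / 64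

def minSum₃ (n : ℚ) : ℚ := 55 / 1728 * n ^ 3 + 1 / 192 * n ^ 2 - 13 / 64 * n + 13 / 64

theorem lowerDualPoly_sub_minSum₁ (k z : ℕ) :
    lowerDualPoly (4 * k + 1 : ℕ) z + ((4 * k + 1 : ℕ) - 1) -
        minSum₁ (3 * (4 * k + 1) : ℕ) =
      (z - k) * (4 * z ^ 2 + (k - 6) * z - 5 * k ^ 2 + 12 * k - 5) := by
  simp only [lowerDualPoly, minSum₁]
  push_cast
  ring

theorem minSum₁_le_lowerDualPoly {k : ℕ} (hk : 2 ≤ k) (z : ℕ) :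
    minSum₁ (3 * (4 * k + 1) : ℕ) ≤
      lowerDualPoly (4 * k + 1 : ℕ) z + ((4 * k + 1 : ℕ) - 1) := by
  have hk' : (2 : ℚ) ≤ k := by exact_mod_cast hk
  rw [← sub_nonneg, lowerDualPoly_sub_minSum₁]
  rcases le_or_gt k z with hkz | hzk
  · have hkz' : (k : ℚ) ≤ z := by exact_mod_cast hkz
    exact mul_nonneg (by linarith) (by nlinarith)
  · have hzk' : (z : ℚ) + 1 ≤ k := by exact_mod_cast hzk
    have hz : (0 : ℚ) ≤ z := z.cast_nonneg
    exact mul_nonneg_of_nonpos_of_nonpos (by linarith)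
      (by nlinarith [mul_nonneg hz (by linarith : (0 : ℚ) ≤ k - 1 - z)])

theorem minSum₁_le_upperDualPoly {k z : ℕ} (hk : 2 ≤ k) (hz : 4 * k + 1 ≤ 2 * z) :
    minSum₁ (3 * (4 * k + 1) : ℕ) ≤
      upperDualPoly (4 * k + 1 : ℕ) z + ((4 * k + 1 : ℕ) - 1) := by
  obtain ⟨w, rfl⟩ : ∃ w, z = 2 * k + 1 + w := ⟨z - (2 * k + 1), by omega⟩
  have hk' : (2 : ℚ) ≤ k := by exact_mod_cast hk
  have hw : (0 : ℚ) ≤ w := w.cast_nonneg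
  have hexpand : upperDualPoly (4 * k + 1 : ℕ) (2 * k + 1 + w : ℕ) + ((4 * k + 1 : ℕ) - 1) -
      minSum₁ (3 * (4 * k + 1) : ℕ) = 4 * w ^ 3 + (3 * k + 3 / 2) * w ^ 2 +
        (6 * k ^ 2 + 12 * k - 19 / 2) * w + 13 * k ^ 3 + 6 * k ^ 2 + 4 * k - 7 := by
    simp only [upperDualPoly, minSum₁]
    push_cast
    ring
  rw [← sub_nonneg, hexpand]
  nlinarith [pow_nonneg hw 3, mul_nonneg (by linarith : (0 : ℚ) ≤ k) (sq_nonneg (w : ℚ)),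
    mul_nonneg (mul_nonneg hw (by linarith : (0 : ℚ) ≤ k)) (by linarith : (0 : ℚ) ≤ k)]

theorem lowerDualPoly_sub_minSum₃ (k z : ℕ) :
    lowerDualPoly (4 * k + 3 : ℕ) z + ((4 * k + 3 : ℕ) - 1) -
        minSum₃ (3 * (4 * k + 3) : ℕ) =
      (z - k) * (4 * z ^ 2 + (k - 15 / 2) * z - 5 * k ^ 2 + 9 / 2 * k + 5 / 2) := by
  simp only [lowerDualPoly, minSum₃]
  push_cast
  ring

theorem minSum₃_le_lowerDualPoly {k : ℕ} (hk : 2 ≤ k) (z : ℕ) :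
    minSum₃ (3 * (4 * k + 3) : ℕ) ≤
      lowerDualPoly (4 * k + 3 : ℕ) z + ((4 * k + 3 : ℕ) - 1) := by
  have hk' : (2 : ℚ) ≤ k := by exact_mod_cast hk
  rw [← sub_nonneg, lowerDualPoly_sub_minSum₃]
  rcases lt_trichotomy z k with hzk | rfl | hkz
  · have hzk' : (z : ℚ) + 1 ≤ k := by exact_mod_cast hzk
    have hz : (0 : ℚ) ≤ z := z.cast_nonneg
    exact mul_nonneg_of_nonpos_of_nonpos (by linarith)
      (by nlinarith [mul_nonneg hz (by linarith : (0 : ℚ) ≤ k - 1 - z)])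
  · simp
  · have hkz' : (k : ℚ) + 1 ≤ z := by exact_mod_cast hkz
    exact mul_nonneg (by linarith) (by nlinarith)

theorem minSum₃_le_upperDualPoly {k z : ℕ} (hk : 2 ≤ k) (hz : 4 * k + 3 ≤ 2 * z) :
    minSum₃ (3 * (4 * k + 3) : ℕ) ≤
      upperDualPoly (4 * k + 3 : ℕ) z + ((4 * k + 3 : ℕ) - 1) := by
  obtain ⟨w, rfl⟩ : ∃ w, z = 2 * k + 2 + w := ⟨z - (2 * k + 2), by omega⟩
  have hk' : (2 : ℚ) ≤ k := by exact_mod_cast hk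
  have hw : (0 : ℚ) ≤ w := w.cast_nonneg
  have hexpand : upperDualPoly (4 * k + 3 : ℕ) (2 * k + 2 + w : ℕ) + ((4 * k + 3 : ℕ) - 1) -
      minSum₃ (3 * (4 * k + 3) : ℕ) = 4 * w ^ 3 + (3 * k + 3) * w ^ 2 +
        (6 * k ^ 2 + 18 * k - 2) * w + 13 * k ^ 3 + 51 / 2 * k ^ 2 + 41 / 2 * k - 2 := by
    simp only [upperDualPoly, minSum₃]
    push_cast
    ring
  rw [← sub_nonneg, hexpand]
  nlinarith [pow_nonneg hw 3, mul_nonneg (by linarith : (0 : ℚ) ≤ k) (sq_nonneg (w : ℚ)),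
    mul_nonneg (mul_nonneg hw (by linarith : (0 : ℚ) ≤ k)) (by linarith : (0 : ℚ) ≤ k)]

theorem IsYXILabeling.dualMinSum (hm : Odd m) (hℓ : IsYXILabeling m ℓ) {T : ℚ} {k : ℕ}
    (hk : 2 * k < m) (hattained : lowerDualPoly m k + (m - 1) = T)
    (hlower : ∀ z : ℕ, 2 * z < m → T ≤ lowerDualPoly m z + (m - 1))
    (hupper : ∀ z : ℕ, m ≤ 2 * z → T ≤ upperDualPoly m z + (m - 1)) :
    (∀ z < m, ∀ i < 3, T ≤ boseDualSum m ℓ z i) ∧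
      ∃ z < m, ∃ i < 3, (boseDualSum m ℓ z i : ℚ) = T := by
  have hm1 : (0 : ℚ) ≤ m - 1 := sub_nonneg.2 (Nat.one_le_cast.2 hm.pos)
  refine ⟨fun z hz i hi => ?_, k, by omega, 0, by norm_num, ?_⟩
  · have hweight := le_mul_of_one_le_right hm1 (one_le_pointWeight hi)
    rcases lt_or_ge (2 * z) m with h | h
    · rw [hℓ.cast_boseDualSum_of_two_mul_lt hm h hi]
      linarith [hlower z h]
    · rw [hℓ.cast_boseDualSum_of_le_two_mul hm h hz hi]
      linarith [hupper z h]
  · rw [hℓ.cast_boseDualSum_of_two_mul_lt hm hk (by norm_num), ← hattained]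
    norm_num [pointWeight]

end Bose

open Bose

/-- For `n = 3m ≥ 27` with `m` odd, the Bose Construction with the Bose
YXI-labeling `ℓ(B_x) = m-1-x`, `ℓ(B_{x,y,i}) = m + i + 3x + 3y(y-1)/2` has
dual min-sum (the minimum over points `(z,i)` of the sum of the labels of the
blocks containing `(z,i)`) equal to
`(55/1728)n³ + (1/192)n² - (9/64)n - 31/64` when `m ≡ 1 (mod 4)` (and `n ≥ 27`),
and to `(55/1728)n³ + (1/192)n² - (13/64)n + 13/64` when `m ≡ 3 (mod 4)`
(and `n ≥ 33`). -/
theorem bose_YXI_dual_minSum (n m : ℕ) (hm : Odd m) (hn : n = 3 * m) (hn27 : 27 ≤ n)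
    (ℓ : Finset (ℕ × ℕ) → ℕ)
    (hT1 : ∀ x < m, ℓ ({(x, 0), (x, 1), (x, 2)} : Finset (ℕ × ℕ)) = m - 1 - x)
    (hT2 : ∀ x y i : ℕ, x < y → y < m → i < 3 →
      ℓ ({(x, i), (y, i), (boseOp m x y, (i + 1) % 3)} : Finset (ℕ × ℕ)) =
        m + i + 3 * x + 3 * (y * (y - 1)) / 2) :
    (m % 4 = 1 →
      (∀ z < m, ∀ i < 3,
        (55 / 1728 : ℚ) * n ^ 3 + (1 / 192 : ℚ) * n ^ 2 - (9 / 64 : ℚ) * n - 31 / 64 ≤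
          ((boseDualSum m ℓ z i : ℕ) : ℚ)) ∧
      (∃ z < m, ∃ i < 3,
        ((boseDualSum m ℓ z i : ℕ) : ℚ) =
          (55 / 1728 : ℚ) * n ^ 3 + (1 / 192 : ℚ) * n ^ 2 - (9 / 64 : ℚ) * n - 31 / 64)) ∧
    (m % 4 = 3 → 33 ≤ n →
      (∀ z < m, ∀ i < 3,
        (55 / 1728 : ℚ) * n ^ 3 + (1 / 192 : ℚ) * n ^ 2 - (13 / 64 : ℚ) * n + 13 / 64 ≤
          ((boseDualSum m ℓ z i : ℕ) : ℚ)) ∧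
      (∃ z < m, ∃ i < 3,
        ((boseDualSum m ℓ z i : ℕ) : ℚ) =
          (55 / 1728 : ℚ) * n ^ 3 + (1 / 192 : ℚ) * n ^ 2 - (13 / 64 : ℚ) * n + 13 / 64)) := by
  have hℓ : IsYXILabeling m ℓ := ⟨hT1, hT2⟩
  subst hn
  constructor
  · intro hm4
    obtain ⟨k, rfl⟩ : ∃ k, m = 4 * k + 1 := ⟨m / 4, by omega⟩
    have hk : 2 ≤ k := by omega
    exact hℓ.dualMinSum hm (k := k) (by omega)
      (sub_eq_zero.1 ((lowerDualPoly_sub_minSum₁ k k).trans (by simp)))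
      (fun z _ => minSum₁_le_lowerDualPoly hk z) (fun _ h => minSum₁_le_upperDualPoly hk h)
  · intro hm4 _
    obtain ⟨k, rfl⟩ : ∃ k, m = 4 * k + 3 := ⟨m / 4, by omega⟩
    have hk : 2 ≤ k := by omega
    exact hℓ.dualMinSum hm (k := k) (by omega)
      (sub_eq_zero.1 ((lowerDualPoly_sub_minSum₃ k k).trans (by simp)))
      (fun z _ => minSum₃_le_lowerDualPoly hk z) (fun _ h => minSum₃_le_upperDualPoly hk h)
end
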